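/- arXiv:1111.4997 — 7 statements merged into one kernel-verified Lean document; each statement's English description precedes it below -/
import Mathlib

section
/- Let M > 1 and m ≥ 0. There exist constants K > 0 and δ > 0 such that for every integer i ≥ 1 and every Θ = (Θ₁,Θ₂,Θ₃,Θ₄) ∈ ℝ⁴ with |Θ_s| ≤ π for each s, the sliced propagator satisfies | ∫_{M^{−2(i+1)}}^{M^{−2i}} [ ∑_{q∈ℤ⁴} e^{−α(q₁²+q₂²+q₃²+q₄²+m²)} e^{i(q₁Θ₁+q₂Θ₂+q₃Θ₃+q₄Θ₄)} ] dα | ≤ K · M^{2i} · e^{−δ M^{i} (|Θ₁|+|Θ₂|+|Θ₃|+|Θ₄|)}. -/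
open Real


/-- summability of `exp (-(n²/8))` over `ℤ`. -/
lemma psb_summable_aux : Summable fun n : ℤ => rexp (-((n : ℝ) ^ 2) / 8) := by
  have hnat : Summable fun n : ℕ => rexp (-((n : ℝ) ^ 2) / 8) := by
    refine Summable.of_nonneg_of_le (fun n => (Real.exp_pos _).le) (fun n => ?_)
      (summable_geometric_of_lt_one (Real.exp_nonneg (-(1/8))) ?_)
    · rw [← Real.exp_nat_mul]
      apply Real.exp_le_exp.2
      have : (n : ℝ) ≤ (n : ℝ) ^ 2 := by
        have := Nat.le_self_pow (two_ne_zero) n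
        exact_mod_cast this
      nlinarith
    · exact Real.exp_lt_one_iff.2 (by norm_num)
  apply Summable.of_nat_of_neg <;> simpa using hnat

lemma psb_summable_gauss {a : ℝ} (ha : 0 < a) : Summable fun n : ℤ => rexp (-(a * (n : ℝ) ^ 2)) := by
  have hnat : Summable fun n : ℕ => rexp (-(a * (n : ℝ) ^ 2)) := by
    refine Summable.of_nonneg_of_le (fun n => (Real.exp_pos _).le) (fun n => ?_)
      (summable_geometric_of_lt_one (Real.exp_nonneg (-a)) ?_)
    · rw [← Real.exp_nat_mul]
      apply Real.exp_le_exp.2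
      have : (n : ℝ) ≤ (n : ℝ) ^ 2 := by
        have := Nat.le_self_pow (two_ne_zero) n
        exact_mod_cast this
      nlinarith
    · exact Real.exp_lt_one_iff.2 (by linarith)
  apply Summable.of_nat_of_neg <;> simpa using hnat

/-- key elementary inequality -/
lemma psb_key_ineq (n : ℤ) (u : ℝ) (hu : |u| ≤ 1/2) :
    u ^ 2 / 2 + (n : ℝ) ^ 2 / 8 ≤ ((n : ℝ) - u) ^ 2 := by
  rcases eq_or_ne n 0 with rfl | hn
  · simp only [Int.cast_zero, zero_sub, neg_sq, zero_pow, ne_eq, OfNat.ofNat_ne_zero,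
      not_false_eq_true]
    nlinarith [sq_nonneg u]
  · have h1 : (1 : ℝ) ≤ |(n : ℝ)| := by
      have : (1 : ℤ) ≤ |n| := Int.one_le_abs hn
      calc (1:ℝ) ≤ (|n| : ℤ) := by exact_mod_cast this
        _ = |(n : ℝ)| := by push_cast; rfl
    have habs : |u| ≤ |(n : ℝ) - u| := by
      have : |(n:ℝ)| - |u| ≤ |(n:ℝ) - u| := abs_sub_abs_le_abs_sub _ _
      have h2 : |u| ≤ 1/2 := hu
      linarith
    have habs2 : |(n : ℝ)| / 2 ≤ |(n : ℝ) - u| := by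
      have : |(n:ℝ)| - |u| ≤ |(n:ℝ) - u| := abs_sub_abs_le_abs_sub _ _
      linarith
    have e1 : u ^ 2 ≤ ((n : ℝ) - u) ^ 2 := by
      rw [← sq_abs u, ← sq_abs ((n:ℝ) - u)]
      exact pow_le_pow_left₀ (abs_nonneg _) habs 2
    have e2 : (n : ℝ) ^ 2 / 4 ≤ ((n : ℝ) - u) ^ 2 := by
      have := pow_le_pow_left₀ (by positivity) habs2 2
      rw [sq_abs] at this
      calc (n:ℝ)^2/4 = (|(n:ℝ)|/2)^2 := by rw [div_pow, sq_abs]; norm_num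
        _ ≤ _ := this
    linarith

noncomputable def psbC0 : ℝ := ∑' n : ℤ, rexp (-((n : ℝ) ^ 2) / 8)





lemma psb_one_le_C0 : 1 ≤ psbC0 := by
  have := Summable.le_tsum psb_summable_aux 0 (fun n _ => (Real.exp_pos _).le)
  simpa [psbC0] using this

lemma psb_one_dim (α x : ℝ) (hα : 0 < α) (hα1 : α ≤ 1) (hx : |x| ≤ π) :
    ‖∑' n : ℤ, Complex.exp (-(α:ℂ) * (n:ℂ)^2 + (x:ℂ) * Complex.I * (n:ℂ))‖ ≤
      Real.sqrt (π/α) * psbC0 * rexp (-(x^2/(8*α))) := by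
  have hπ : (0:ℝ) < π := pi_pos
  have ha : (0:ℝ) < α/π := div_pos hα hπ
  have hπc : (π:ℂ) ≠ 0 := by exact_mod_cast Real.pi_ne_zero
  have hαc : (α:ℂ) ≠ 0 := by exact_mod_cast hα.ne'
  have key := Complex.tsum_exp_neg_quadratic (a := ((α/π : ℝ) : ℂ))
    (by simpa using ha) ((x:ℂ) * Complex.I / (2*π))
  have h1 : (fun n : ℤ => Complex.exp (-(α:ℂ) * (n:ℂ)^2 + (x:ℂ) * Complex.I * (n:ℂ)))
      = fun n : ℤ => Complex.exp (-(π:ℂ) * ((α/π : ℝ) : ℂ) * (n:ℂ)^2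
          + 2 * (π:ℂ) * ((x:ℂ) * Complex.I / (2*π)) * (n:ℂ)) := by
    funext n; congr 1; push_cast; field_simp
  have h2 : (fun n : ℤ => Complex.exp (-(π:ℂ) / ((α/π : ℝ) : ℂ)
        * ((n:ℂ) + Complex.I * ((x:ℂ) * Complex.I / (2*π)))^2))
      = fun n : ℤ => ((rexp (-(π^2/α) * ((n:ℝ) - x/(2*π))^2) : ℝ) : ℂ) := by
    funext n
    rw [Complex.ofReal_exp]
    congr 1
    push_cast
    have hI : Complex.I * ((x:ℂ) * Complex.I / (2*(π:ℂ))) = -((x:ℂ) / (2*π)) := by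
      field_simp
      rw [Complex.I_sq]
      ring
    rw [hI]
    field_simp
    ring
  have E : (∑' n : ℤ, Complex.exp (-(α:ℂ) * (n:ℂ)^2 + (x:ℂ) * Complex.I * (n:ℂ)))
      = (1 / ((α/π : ℝ) : ℂ) ^ (1/2 : ℂ))
        * ((∑' n : ℤ, rexp (-(π^2/α) * ((n:ℝ) - x/(2*π))^2) : ℝ) : ℂ) := by
    rw [h1, key, Complex.ofReal_tsum, h2]
  rw [E, norm_mul]
  have hnorm : ‖(1:ℂ) / ((α/π : ℝ) : ℂ) ^ (1/2 : ℂ)‖ = Real.sqrt (π/α) := by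
    rw [norm_div, norm_one, Complex.norm_cpow_eq_rpow_re_of_pos ha]
    norm_num
    rw [← Real.sqrt_eq_rpow, ← Real.sqrt_inv, inv_div]
  -- bound the real tsum
  have hu : |x/(2*π)| ≤ 1/2 := by
    rw [abs_div, abs_of_pos (by positivity : (0:ℝ) < 2*π), div_le_div_iff₀ (by positivity) two_pos]
    linarith
  have hsummand : ∀ n : ℤ, rexp (-(π^2/α) * ((n:ℝ) - x/(2*π))^2)
      ≤ rexp (-(x^2/(8*α))) * rexp (-((n:ℝ)^2)/8) := by
    intro n
    rw [← Real.exp_add]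
    apply Real.exp_le_exp.2
    have hk := psb_key_ineq n (x/(2*π)) hu
    have hππ : 1 ≤ π^2/α := by
      rw [le_div_iff₀ hα]
      nlinarith [Real.pi_gt_three]
    have h5 : (π^2/α) * ((x/(2*π))^2/2) = x^2/(8*α) := by field_simp; ring
    have h6 : (n:ℝ)^2/8 ≤ (π^2/α) * ((n:ℝ)^2/8) := le_mul_of_one_le_left (by positivity) hππ
    have h7 : (π^2/α) * ((x/(2*π))^2/2 + (n:ℝ)^2/8) ≤ (π^2/α) * ((n:ℝ) - x/(2*π))^2 :=
      mul_le_mul_of_nonneg_left hk (by positivity)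
    nlinarith
  have hS2 : Summable fun n : ℤ => rexp (-(x^2/(8*α))) * rexp (-((n:ℝ)^2)/8) :=
    psb_summable_aux.mul_left _
  have hS1 : Summable fun n : ℤ => rexp (-(π^2/α) * ((n:ℝ) - x/(2*π))^2) :=
    Summable.of_nonneg_of_le (fun n => (Real.exp_pos _).le) hsummand hS2
  have htsum : ‖((∑' n : ℤ, rexp (-(π^2/α) * ((n:ℝ) - x/(2*π))^2) : ℝ) : ℂ)‖
      ≤ rexp (-(x^2/(8*α))) * psbC0 := by
    rw [Complex.norm_real, Real.norm_eq_abs,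
      abs_of_nonneg (tsum_nonneg fun n => (Real.exp_pos _).le)]
    calc (∑' n : ℤ, rexp (-(π^2/α) * ((n:ℝ) - x/(2*π))^2))
        ≤ ∑' n : ℤ, rexp (-(x^2/(8*α))) * rexp (-((n:ℝ)^2)/8) := Summable.tsum_le_tsum hsummand hS1 hS2
      _ = rexp (-(x^2/(8*α))) * psbC0 := tsum_mul_left
  calc ‖(1:ℂ) / ((α/π : ℝ) : ℂ) ^ (1/2 : ℂ)‖ * ‖((∑' n : ℤ, rexp (-(π^2/α) * ((n:ℝ) - x/(2*π))^2) : ℝ) : ℂ)‖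
      ≤ Real.sqrt (π/α) * (rexp (-(x^2/(8*α))) * psbC0) := by
        rw [hnorm]; exact mul_le_mul_of_nonneg_left htsum (Real.sqrt_nonneg _)
    _ = Real.sqrt (π/α) * psbC0 * rexp (-(x^2/(8*α))) := by ring

def psbE4 : (ℤ × ℤ × ℤ × ℤ) ≃ (Fin 4 → ℤ) where
  toFun p := ![p.1, p.2.1, p.2.2.1, p.2.2.2]
  invFun q := (q 0, q 1, q 2, q 3)
  left_inv p := rfl
  right_inv q := by
    funext s
    fin_cases s <;> rfl

lemma psb_tsum_four (g : Fin 4 → ℤ → ℂ) (hg : ∀ s, Summable fun n => ‖g s n‖) :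
    ∑' q : Fin 4 → ℤ, (∏ s, g s (q s)) = ∏ s, (∑' n : ℤ, g s n) := by
  rw [← psbE4.tsum_eq (fun q : Fin 4 → ℤ => ∏ s, g s (q s))]
  have h1 : ∀ p : ℤ × ℤ × ℤ × ℤ, (∏ s, g s (psbE4 p s))
      = g 0 p.1 * (g 1 p.2.1 * (g 2 p.2.2.1 * g 3 p.2.2.2)) := by
    intro p
    rw [Fin.prod_univ_four]
    change g 0 p.1 * g 1 p.2.1 * g 2 p.2.2.1 * g 3 p.2.2.2 = _
    ring
  simp_rw [h1]
  rw [Fin.prod_univ_four]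
  rw [mul_assoc, mul_assoc, tsum_mul_tsum_of_summable_norm (hg 2) (hg 3),
    tsum_mul_tsum_of_summable_norm (hg 1) ((hg 2).mul_norm (hg 3)),
    tsum_mul_tsum_of_summable_norm (hg 0) ((hg 1).mul_norm ((hg 2).mul_norm (hg 3)))]









lemma psb_pointwise (m α : ℝ) (hm : 0 ≤ m) (hα : 0 < α) (hα1 : α ≤ 1)
    (Θ : Fin 4 → ℝ) (hΘ : ∀ s, |Θ s| ≤ π) :
    ‖∑' q : Fin 4 → ℤ, Complex.exp (-(α * ((∑ s, ((q s : ℝ)) ^ 2) + m ^ 2)) : ℂ) *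
        Complex.exp (((∑ s, (q s : ℝ) * Θ s : ℝ) : ℂ) * Complex.I)‖ ≤
      (π/α)^2 * psbC0^4 * rexp (-((∑ s, (Θ s)^2)/(8*α))) := by
  set g : Fin 4 → ℤ → ℂ := fun s n => Complex.exp (-(α:ℂ) * (n:ℂ)^2 + ((Θ s : ℝ):ℂ) * Complex.I * (n:ℂ)) with hg_def
  have hgsum : ∀ s, Summable fun n => ‖g s n‖ := by
    intro s
    have : ∀ n : ℤ, ‖g s n‖ = rexp (-(α * (n:ℝ)^2)) := by
      intro n
      have hre : (-(α:ℂ) * (n:ℂ)^2 + ((Θ s : ℝ):ℂ) * Complex.I * (n:ℂ))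
          = ((-(α * (n:ℝ)^2) : ℝ) : ℂ) + ((Θ s * (n:ℝ) : ℝ) : ℂ) * Complex.I := by
        push_cast; ring
      rw [hg_def]
      simp only
      rw [hre]
      simp only [Complex.norm_exp, Complex.add_re, Complex.ofReal_re,
        Complex.mul_re, Complex.I_re, Complex.I_im, Complex.ofReal_im]
      norm_num
    simp_rw [this]
    exact psb_summable_gauss hα
  -- rewrite the summand
  have hsummand : ∀ q : Fin 4 → ℤ,
      Complex.exp (-(α * ((∑ s, ((q s : ℝ)) ^ 2) + m ^ 2)) : ℂ) *
        Complex.exp (((∑ s, (q s : ℝ) * Θ s : ℝ) : ℂ) * Complex.I)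
      = Complex.exp ((-(α * m^2) : ℝ) : ℂ) * ∏ s, g s (q s) := by
    intro q
    rw [hg_def]
    simp only
    rw [← Complex.exp_sum, ← Complex.exp_add, ← Complex.exp_add]
    congr 1
    rw [Fin.sum_univ_four, Fin.sum_univ_four, Fin.sum_univ_four]
    push_cast
    ring
  rw [tsum_congr hsummand, tsum_mul_left, psb_tsum_four g hgsum, norm_mul]
  have hc : ‖Complex.exp ((-(α * m^2) : ℝ) : ℂ)‖ ≤ 1 := by
    rw [Complex.norm_exp]
    simp only [Complex.ofReal_re]
    rw [Real.exp_le_one_iff]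
    nlinarith
  have hprod : ‖∏ s, (∑' n : ℤ, g s n)‖ ≤
      ∏ s, (Real.sqrt (π/α) * psbC0 * rexp (-((Θ s)^2/(8*α)))) := by
    rw [norm_prod]
    apply Finset.prod_le_prod (fun s _ => norm_nonneg _)
    intro s _
    exact psb_one_dim α (Θ s) hα hα1 (hΘ s)
  have hC0 : 0 ≤ psbC0 := tsum_nonneg fun n => (Real.exp_pos _).le
  have heq : ∏ s, (Real.sqrt (π/α) * psbC0 * rexp (-((Θ s)^2/(8*α))))
      = (π/α)^2 * psbC0^4 * rexp (-((∑ s, (Θ s)^2)/(8*α))) := by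
    rw [Fin.prod_univ_four]
    rw [show (-((∑ s, (Θ s)^2)/(8*α))) = -((Θ 0)^2/(8*α)) + -((Θ 1)^2/(8*α)) + -((Θ 2)^2/(8*α)) + -((Θ 3)^2/(8*α)) by
      rw [Fin.sum_univ_four]; field_simp; ring]
    rw [Real.exp_add, Real.exp_add, Real.exp_add]
    have h4 : Real.sqrt (π/α) ^ 4 = (π/α)^2 := by
      rw [show (4:ℕ) = 2*2 by norm_num, pow_mul, Real.sq_sqrt (by positivity : (0:ℝ) ≤ π/α)]
    rw [← h4]; ring
  calc ‖Complex.exp ((-(α * m^2) : ℝ) : ℂ)‖ * ‖∏ s, (∑' n : ℤ, g s n)‖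
      ≤ 1 * (∏ s, (Real.sqrt (π/α) * psbC0 * rexp (-((Θ s)^2/(8*α))))) := by
        apply mul_le_mul hc hprod (norm_nonneg _) zero_le_one
    _ = (π/α)^2 * psbC0^4 * rexp (-((∑ s, (Θ s)^2)/(8*α))) := by rw [one_mul, heq]







set_option maxHeartbeats 1000000 in
/-- Slice bound (3.9) of Lemma 1: for `M > 1`, `m ≥ 0`, there exist `K, δ > 0`
such that for every `i ≥ 1` and `Θ ∈ ℝ⁴` with `|Θ_s| ≤ π`,
`|∫_{M^{−2(i+1)}}^{M^{−2i}} [∑_{q∈ℤ⁴} e^{−α(|q|²+m²)} e^{i q·Θ}] dα|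
  ≤ K M^{2i} e^{−δ M^i ∑_s |Θ_s|}`. -/
theorem propagator_slice_bound (M m : ℝ) (hM : 1 < M) (hm : 0 ≤ m) :
    ∃ K > (0 : ℝ), ∃ δ > (0 : ℝ), ∀ i : ℕ, 1 ≤ i → ∀ Θ : Fin 4 → ℝ,
      (∀ s, |Θ s| ≤ Real.pi) →
      ‖∫ α in (M ^ (-(2 * ((i : ℤ) + 1))))..(M ^ (-(2 * (i : ℤ)))),
          ∑' q : Fin 4 → ℤ, Complex.exp (-(α * ((∑ s, ((q s : ℝ)) ^ 2) + m ^ 2)) : ℂ) *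
            Complex.exp (((∑ s, (q s : ℝ) * Θ s : ℝ) : ℂ) * Complex.I)‖ ≤
        K * M ^ (2 * i) * Real.exp (-δ * M ^ i * ∑ s, |Θ s|) := by
  have hM0 : (0:ℝ) < M := lt_trans zero_lt_one hM
  have hC0 : (0:ℝ) < psbC0 := lt_of_lt_of_le one_pos psb_one_le_C0
  refine ⟨π^2 * M^4 * psbC0^4 * rexp (1/8),
    by positivity, 1/8, by norm_num, ?_⟩
  intro i hi Θ hΘ
  set a : ℝ := M ^ (-(2 * ((i : ℤ) + 1))) with ha_def
  set b : ℝ := M ^ (-(2 * (i : ℤ))) with hb_def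
  have ha_eq : a = ((M ^ (2*i+2) : ℝ))⁻¹ := by
    rw [ha_def, show -(2 * ((i:ℤ) + 1)) = -((2*i+2 : ℕ) : ℤ) by push_cast; ring,
      zpow_neg, zpow_natCast]
  have hb_eq : b = ((M ^ (2*i) : ℝ))⁻¹ := by
    rw [hb_def, show -(2 * (i:ℤ)) = -((2*i : ℕ) : ℤ) by push_cast; ring,
      zpow_neg, zpow_natCast]
  have ha0 : 0 < a := by rw [ha_eq]; positivity
  have hb0 : 0 < b := by rw [hb_eq]; positivity
  have hab : a ≤ b := by
    rw [ha_eq, hb_eq]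
    apply inv_anti₀ (by positivity)
    apply pow_le_pow_right₀ hM.le (by omega)
  have hb1 : b ≤ 1 := by
    rw [hb_eq]
    apply inv_le_one_of_one_le₀
    exact one_le_pow₀ hM.le
  set C : ℝ := π^2 * ((M^(2*i+2))^2) * psbC0^4 *
      (rexp (1/8) * rexp (-(1/8) * M^i * ∑ s, |Θ s|)) with hC_def
  have hbound : ∀ α ∈ Set.uIoc a b, ‖∑' q : Fin 4 → ℤ,
      Complex.exp (-(α * ((∑ s, ((q s : ℝ)) ^ 2) + m ^ 2)) : ℂ) *
        Complex.exp (((∑ s, (q s : ℝ) * Θ s : ℝ) : ℂ) * Complex.I)‖ ≤ C := by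
    intro α hα
    rw [Set.uIoc_of_le hab] at hα
    obtain ⟨hα1, hα2⟩ := hα
    have hα0 : 0 < α := lt_trans ha0 hα1
    refine le_trans (psb_pointwise m α hm hα0 (le_trans hα2 hb1) Θ hΘ) ?_
    rw [hC_def]
    have hinv1 : α⁻¹ ≤ M^(2*i+2) := by
      rw [ha_eq] at hα1
      rw [← inv_inv (M^(2*i+2))]
      exact inv_anti₀ (by positivity) hα1.le
    have hpows : (π/α)^2 ≤ π^2 * (M^(2*i+2))^2 := by
      rw [div_pow, div_eq_mul_inv, ← inv_pow]
      apply mul_le_mul_of_nonneg_left _ (by positivity)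
      apply pow_le_pow_left₀ (by positivity) hinv1
    have hexp : rexp (-((∑ s, (Θ s)^2)/(8*α))) ≤
        rexp (1/8) * rexp (-(1/8) * M^i * ∑ s, |Θ s|) := by
      rw [← Real.exp_add]
      apply Real.exp_le_exp.2
      have hinv2 : (M:ℝ)^(2*i) ≤ α⁻¹ := by
        rw [hb_eq] at hα2
        rw [← inv_inv ((M:ℝ)^(2*i))]
        exact inv_anti₀ (by positivity) hα2
      have hS : (0:ℝ) ≤ ∑ s, (Θ s)^2 := Finset.sum_nonneg fun s _ => sq_nonneg _
      have step1 : -((∑ s, (Θ s)^2)/(8*α)) ≤ -(M^(2*i)) * (∑ s, (Θ s)^2) / 8 := by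
        have := mul_le_mul_of_nonneg_right hinv2 hS
        have heq : ((∑ s, (Θ s)^2)/(8*α)) = α⁻¹ * (∑ s, (Θ s)^2) / 8 := by ring
        rw [heq]
        linarith
      refine le_trans step1 ?_
      have hMi : (M:ℝ)^(2*i) = (M^i)^2 := by rw [← pow_mul, mul_comm]
      rw [hMi, Fin.sum_univ_four, Fin.sum_univ_four]
      have h0 := sq_nonneg (2*(M^i*|Θ 0|) - 1)
      have h1 := sq_nonneg (2*(M^i*|Θ 1|) - 1)
      have h2 := sq_nonneg (2*(M^i*|Θ 2|) - 1)
      have h3 := sq_nonneg (2*(M^i*|Θ 3|) - 1)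
      have e0 := sq_abs (Θ 0); have e1 := sq_abs (Θ 1)
      have e2 := sq_abs (Θ 2); have e3 := sq_abs (Θ 3)
      nlinarith [sq_nonneg ((M:ℝ)^i)]
    have hstep : (π/α)^2 * psbC0^4 ≤ (π^2 * (M^(2*i+2))^2) * psbC0^4 :=
      mul_le_mul_of_nonneg_right hpows (by positivity)
    exact mul_le_mul hstep hexp (Real.exp_pos _).le
      (mul_nonneg (by positivity) (by positivity))
  refine le_trans (intervalIntegral.norm_integral_le_of_norm_le_const hbound) ?_
  have hba : |b - a| ≤ (M^(2*i))⁻¹ := by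
    rw [abs_of_nonneg (by linarith), ← hb_eq]
    linarith
  have hCpos : 0 ≤ C := by rw [hC_def]; positivity
  calc C * |b - a| ≤ C * (M^(2*i))⁻¹ := mul_le_mul_of_nonneg_left hba hCpos
    _ = π^2 * M^4 * psbC0^4 * rexp (1/8) * M ^ (2 * i) * rexp (-(1/8) * M^i * ∑ s, |Θ s|) := by
        rw [hC_def]
        have hpow : ((M:ℝ)^(2*i+2))^2 * (M^(2*i))⁻¹ = M^4 * M^(2*i) := by
          have h2 : ((M:ℝ)^(2*i+2))^2 = (M^4 * M^(2*i)) * M^(2*i) := by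
            rw [← pow_mul, ← pow_add, ← pow_add]
            congr 1
            ring
          rw [h2, mul_inv_cancel_right₀ (by positivity : ((M:ℝ)^(2*i)) ≠ 0)]
        calc π^2 * ((M^(2*i+2))^2) * psbC0^4 *
              (rexp (1/8) * rexp (-(1/8) * M^i * ∑ s, |Θ s|)) * (M^(2*i))⁻¹
            = π^2 * psbC0^4 * rexp (1/8) * rexp (-(1/8) * M^i * ∑ s, |Θ s|)
                * (((M^(2*i+2))^2) * (M^(2*i))⁻¹) := by ring
          _ = _ := by rw [hpow]; ring
    _ ≤ _ := le_refl _
end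

section
/- Let M > 1 and m > 0. There exist constants K > 0 and δ > 0 such that for every Θ = (Θ₁,Θ₂,Θ₃,Θ₄) ∈ ℝ⁴ with |Θ_s| ≤ 2π for each s, the zeroth slice of the propagator satisfies | ∫_{1}^{∞} [ ∑_{q∈ℤ⁴} e^{−α(q₁²+q₂²+q₃²+q₄²+m²)} e^{i(q₁Θ₁+q₂Θ₂+q₃Θ₃+q₄Θ₄)} ] dα | ≤ K · e^{−δ (|Θ₁|+|Θ₂|+|Θ₃|+|Θ₄|)}. -/
open Real

private lemma summable_exp_neg_sq_nat : Summable (fun n : ℕ => Real.exp (-(n : ℝ) ^ 2)) := by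
  refine Summable.of_nonneg_of_le (fun n => (Real.exp_pos _).le) (fun n => ?_)
    (summable_geometric_of_lt_one (Real.exp_pos (-1)).le (Real.exp_lt_one_iff.mpr (by norm_num)))
  rw [← Real.exp_nat_mul]
  apply Real.exp_le_exp.mpr
  have : (n : ℝ) ≤ (n : ℝ) ^ 2 := by exact_mod_cast Nat.le_self_pow two_ne_zero n
  nlinarith

private lemma summable_exp_neg_sq_int : Summable (fun n : ℤ => Real.exp (-(n : ℝ) ^ 2)) := by
  apply Summable.of_nat_of_neg
  · exact summable_exp_neg_sq_nat
  · simpa using summable_exp_neg_sq_nat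

private def equivFin4 : (Fin 4 → ℤ) ≃ (ℤ × ℤ) × ℤ × ℤ where
  toFun q := ((q 0, q 1), q 2, q 3)
  invFun p := ![p.1.1, p.1.2, p.2.1, p.2.2]
  left_inv q := by funext i; fin_cases i <;> rfl
  right_inv p := rfl

set_option maxHeartbeats 1000000 in
private lemma summable_F :
    Summable (fun q : Fin 4 → ℤ => Real.exp (-(∑ s, ((q s : ℝ)) ^ 2))) := by
  have h2 : Summable (fun p : ℤ × ℤ => Real.exp (-(p.1 : ℝ) ^ 2) * Real.exp (-(p.2 : ℝ) ^ 2)) :=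
    summable_exp_neg_sq_int.mul_of_nonneg summable_exp_neg_sq_int
      (fun _ => (Real.exp_pos _).le) (fun _ => (Real.exp_pos _).le)
  have h4 : Summable (fun p : (ℤ × ℤ) × ℤ × ℤ =>
      (Real.exp (-(p.1.1 : ℝ) ^ 2) * Real.exp (-(p.1.2 : ℝ) ^ 2)) *
      (Real.exp (-(p.2.1 : ℝ) ^ 2) * Real.exp (-(p.2.2 : ℝ) ^ 2))) :=
    h2.mul_of_nonneg h2 (fun _ => mul_nonneg (Real.exp_pos _).le (Real.exp_pos _).le)
      (fun _ => mul_nonneg (Real.exp_pos _).le (Real.exp_pos _).le)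
  have key := (Equiv.summable_iff equivFin4).mpr h4
  have heq : (fun q : Fin 4 → ℤ => Real.exp (-(∑ s, ((q s : ℝ)) ^ 2)))
      = ((fun p : (ℤ × ℤ) × ℤ × ℤ =>
      (Real.exp (-(p.1.1 : ℝ) ^ 2) * Real.exp (-(p.1.2 : ℝ) ^ 2)) *
      (Real.exp (-(p.2.1 : ℝ) ^ 2) * Real.exp (-(p.2.2 : ℝ) ^ 2))) ∘ ⇑equivFin4) := by
    funext q
    simp only [Function.comp_apply, equivFin4, Equiv.coe_fn_mk, Fin.sum_univ_four,
      ← Real.exp_add]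
    ring_nf
    rfl
  rw [heq]
  exact key

/-- Zeroth-slice bound of Lemma 1 (equation (3.9) for `i = 0`): for `M > 1` and
`m > 0` there exist `K, δ > 0` such that for every `Θ ∈ ℝ⁴` with `|Θ_s| ≤ 2π`,
`|∫_1^∞ [∑_{q∈ℤ⁴} e^{−α(|q|²+m²)} e^{i q·Θ}] dα| ≤ K e^{−δ ∑_s |Θ_s|}`. -/
theorem propagator_zeroth_slice_bound (M m : ℝ) (hM : 1 < M) (hm : 0 < m) :
    ∃ K > (0 : ℝ), ∃ δ > (0 : ℝ), ∀ Θ : Fin 4 → ℝ,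
      (∀ s, |Θ s| ≤ 2 * Real.pi) →
      ‖∫ α in Set.Ioi (1 : ℝ),
          ∑' q : Fin 4 → ℤ, Complex.exp (-(α * ((∑ s, ((q s : ℝ)) ^ 2) + m ^ 2)) : ℂ) *
            Complex.exp (((∑ s, (q s : ℝ) * Θ s : ℝ) : ℂ) * Complex.I)‖ ≤
        K * Real.exp (-δ * ∑ s, |Θ s|) := by
  have hQnn : ∀ q : Fin 4 → ℤ, 0 ≤ ∑ s, ((q s : ℝ)) ^ 2 :=
    fun q => Finset.sum_nonneg fun s _ => sq_nonneg _
  set S : ℝ := ∑' q : Fin 4 → ℤ, Real.exp (-(∑ s, ((q s : ℝ)) ^ 2)) with hS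
  have hSsum : Summable (fun q : Fin 4 → ℤ => Real.exp (-(∑ s, ((q s : ℝ)) ^ 2))) := summable_F
  have hm2 : (0 : ℝ) < m ^ 2 := by positivity
  set g : ℝ → ℝ := fun α => S * Real.exp (-(m ^ 2) * α) with hg
  have hgInt : MeasureTheory.IntegrableOn g (Set.Ioi (1 : ℝ)) :=
    (exp_neg_integrableOn_Ioi 1 hm2).const_mul S
  set C : ℝ := ∫ α in Set.Ioi (1 : ℝ), g α with hC
  have hCnn : 0 ≤ C :=
    MeasureTheory.integral_nonneg fun α => mul_nonneg (tsum_nonneg fun q => (Real.exp_pos _).le)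
      (Real.exp_pos _).le
  refine ⟨(C + 1) * Real.exp (8 * Real.pi), by positivity, 1, one_pos, fun Θ hΘ => ?_⟩
  have hnorm_int :
      ‖∫ α in Set.Ioi (1 : ℝ),
          ∑' q : Fin 4 → ℤ, Complex.exp (-(α * ((∑ s, ((q s : ℝ)) ^ 2) + m ^ 2)) : ℂ) *
            Complex.exp (((∑ s, (q s : ℝ) * Θ s : ℝ) : ℂ) * Complex.I)‖ ≤ C := by
    apply MeasureTheory.norm_integral_le_of_norm_le hgInt
    rw [MeasureTheory.ae_restrict_iff' measurableSet_Ioi]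
    refine MeasureTheory.ae_of_all _ fun α hα => ?_
    have hα1 : (1 : ℝ) ≤ α := le_of_lt hα
    have hnorm : ∀ q : Fin 4 → ℤ,
        ‖Complex.exp (-(α * ((∑ s, ((q s : ℝ)) ^ 2) + m ^ 2)) : ℂ) *
          Complex.exp (((∑ s, (q s : ℝ) * Θ s : ℝ) : ℂ) * Complex.I)‖ =
        Real.exp (-(α * ((∑ s, ((q s : ℝ)) ^ 2) + m ^ 2))) := by
      intro q
      rw [norm_mul]
      have h1 : (-(α * ((∑ s, ((q s : ℝ)) ^ 2) + m ^ 2)) : ℂ) =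
          ((-(α * ((∑ s, ((q s : ℝ)) ^ 2) + m ^ 2)) : ℝ) : ℂ) := by
        push_cast; ring
      rw [h1, Complex.norm_exp, Complex.norm_exp,
        Complex.ofReal_re]
      simp [Complex.mul_I_re]
    have hle : ∀ q : Fin 4 → ℤ,
        Real.exp (-(α * ((∑ s, ((q s : ℝ)) ^ 2) + m ^ 2))) ≤
          Real.exp (-(∑ s, ((q s : ℝ)) ^ 2)) * Real.exp (-(m ^ 2) * α) := by
      intro q
      rw [← Real.exp_add]
      apply Real.exp_le_exp.mpr
      nlinarith [hQnn q, sq_nonneg m]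
    have hbsum : Summable (fun q : Fin 4 → ℤ =>
        Real.exp (-(∑ s, ((q s : ℝ)) ^ 2)) * Real.exp (-(m ^ 2) * α)) := hSsum.mul_right _
    have hnsum : Summable (fun q : Fin 4 → ℤ =>
        ‖Complex.exp (-(α * ((∑ s, ((q s : ℝ)) ^ 2) + m ^ 2)) : ℂ) *
          Complex.exp (((∑ s, (q s : ℝ) * Θ s : ℝ) : ℂ) * Complex.I)‖) := by
      apply Summable.of_nonneg_of_le (fun q => norm_nonneg _) (fun q => ?_) hbsum
      rw [hnorm q]; exact hle q
    calc ‖∑' q : Fin 4 → ℤ, Complex.exp (-(α * ((∑ s, ((q s : ℝ)) ^ 2) + m ^ 2)) : ℂ) *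
            Complex.exp (((∑ s, (q s : ℝ) * Θ s : ℝ) : ℂ) * Complex.I)‖
        ≤ ∑' q : Fin 4 → ℤ,
            ‖Complex.exp (-(α * ((∑ s, ((q s : ℝ)) ^ 2) + m ^ 2)) : ℂ) *
              Complex.exp (((∑ s, (q s : ℝ) * Θ s : ℝ) : ℂ) * Complex.I)‖ :=
          norm_tsum_le_tsum_norm hnsum
      _ ≤ ∑' q : Fin 4 → ℤ,
            Real.exp (-(∑ s, ((q s : ℝ)) ^ 2)) * Real.exp (-(m ^ 2) * α) := by
          refine Summable.tsum_le_tsum (fun q => ?_) hnsum hbsum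
          rw [hnorm q]; exact hle q
      _ = g α := by rw [hg, hS]; exact tsum_mul_right
  have hΘ8 : ∑ s, |Θ s| ≤ 8 * Real.pi := by
    calc ∑ s, |Θ s| ≤ ∑ _s : Fin 4, 2 * Real.pi := Finset.sum_le_sum fun s _ => hΘ s
      _ = 8 * Real.pi := by simp [Finset.sum_const]; ring
  calc ‖∫ α in Set.Ioi (1 : ℝ),
          ∑' q : Fin 4 → ℤ, Complex.exp (-(α * ((∑ s, ((q s : ℝ)) ^ 2) + m ^ 2)) : ℂ) *
            Complex.exp (((∑ s, (q s : ℝ) * Θ s : ℝ) : ℂ) * Complex.I)‖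
      ≤ C := hnorm_int
    _ ≤ (C + 1) * (Real.exp (8 * Real.pi) * Real.exp (-1 * ∑ s, |Θ s|)) := by
        rw [← Real.exp_add]
        have h1 : (1 : ℝ) ≤ Real.exp (8 * Real.pi + -1 * ∑ s, |Θ s|) :=
          Real.one_le_exp (by linarith)
        nlinarith
    _ = (C + 1) * Real.exp (8 * Real.pi) * Real.exp (-1 * ∑ s, |Θ s|) := by ring
end

section
/- For every α > 0 and every Θ ∈ ℝ, e^{−Θ²/(4α)} · (1 + 2 ∑_{n=1}^{∞} e^{−π² n²/α} cosh(nπΘ/α)) ≤ 1 + √(α/π). -/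
open Real

open MeasureTheory Finset

lemma theta_gauss_term_le {b : ℝ} (hb : 0 < b) {θ : ℝ} (hθ1 : -π ≤ θ) (hθ2 : θ ≤ π)
    {i : ℤ} (hi : i ≠ 0) :
    Real.exp (-b * (θ + 2*π*i)^2) ≤
      (2*π)⁻¹ * ∫ x in Set.Ioc (θ + 2*π*(if 0 < i then (i:ℝ) - 1 else (i:ℝ)))
        (θ + 2*π*((if 0 < i then (i:ℝ) - 1 else (i:ℝ)) + 1)), Real.exp (-b * x^2) := by
  have hπ : (0:ℝ) < π := Real.pi_pos
  set m : ℝ := if 0 < i then (i:ℝ) - 1 else (i:ℝ) with hm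
  have hkey : ∀ x ∈ Set.Ioc (θ + 2*π*m) (θ + 2*π*(m+1)),
      Real.exp (-b * (θ + 2*π*i)^2) ≤ Real.exp (-b * x^2) := by
    intro x hx
    obtain ⟨hx1, hx2⟩ := hx
    apply Real.exp_le_exp.2
    have hsq : x^2 ≤ (θ + 2*π*i)^2 := by
      rcases lt_or_ge 0 i with h | h
      · have hi1 : (1:ℝ) ≤ (i:ℝ) := by exact_mod_cast h
        have h4 : 2*π ≤ 2*π*(i:ℝ) := by nlinarith
        have hm' : m = (i:ℝ) - 1 := by rw [hm, if_pos h]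
        rw [hm'] at hx1 hx2
        exact sq_le_sq' (by linarith) (by linarith)
      · have h' : i < 0 := lt_of_le_of_ne h hi
        have hi1 : (i:ℝ) ≤ -1 := by
          have : i ≤ -1 := by omega
          exact_mod_cast this
        have h4 : 2*π*(i:ℝ) ≤ -(2*π) := by nlinarith
        have hm' : m = (i:ℝ) := by rw [hm, if_neg (not_lt.2 h)]
        rw [hm'] at hx1 hx2
        have := sq_le_sq' (a := x) (b := -(θ + 2*π*(i:ℝ)))
          (by linarith) (by linarith)
        rwa [neg_sq] at this
    nlinarith
  have hmeas : MeasurableSet (Set.Ioc (θ + 2*π*m) (θ + 2*π*(m+1))) := measurableSet_Ioc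
  have hvol : (volume (Set.Ioc (θ + 2*π*m) (θ + 2*π*(m+1)))).toReal = 2*π := by
    rw [Real.volume_Ioc, ENNReal.toReal_ofReal (by nlinarith)]
    ring
  have hint : IntegrableOn (fun x : ℝ => Real.exp (-b * x^2))
      (Set.Ioc (θ + 2*π*m) (θ + 2*π*(m+1))) volume :=
    (integrable_exp_neg_mul_sq hb).integrableOn
  have H := setIntegral_ge_of_const_le_real (μ := volume) hmeas
      (by rw [Real.volume_Ioc]; exact ENNReal.ofReal_ne_top) hkey hint
  rw [measureReal_def, hvol] at H
  have h2π : (0:ℝ) < 2*π := by linarith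
  rw [inv_mul_eq_div, le_div_iff₀ h2π]
  linarith


lemma theta_sum_offcenter_le {α θ : ℝ} (hα : 0 < α) (hθ1 : -π ≤ θ) (hθ2 : θ ≤ π)
    (s : Finset ℤ) (hs : 0 ∉ s) :
    ∑ i ∈ s, Real.exp (-(4*α)⁻¹ * (θ + 2*π*i)^2) ≤ Real.sqrt (α/π) := by
  have hπ : (0:ℝ) < π := Real.pi_pos
  have hb : (0:ℝ) < (4*α)⁻¹ := by positivity
  set b : ℝ := (4*α)⁻¹ with hbdef
  set g : ℝ → ℝ := fun x => Real.exp (-b * x^2) with hg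
  have hgint : Integrable g := integrable_exp_neg_mul_sq hb
  set φ : ℤ → ℤ := fun i => if 0 < i then i - 1 else i with hφ
  set I : ℤ → Set ℝ := fun m => Set.Ioc (θ + 2*π*m) (θ + 2*π*(m+1)) with hI
  -- step 1: termwise bound
  have step1 : ∀ i ∈ s, Real.exp (-b * (θ + 2*π*i)^2) ≤ (2*π)⁻¹ * ∫ x in I (φ i), g x := by
    intro i his
    have hi : i ≠ 0 := fun h => hs (h ▸ his)
    have := theta_gauss_term_le hb hθ1 hθ2 hi
    convert this using 4 <;>
      · simp only [hφ, hI]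
        split_ifs <;> push_cast <;> ring
  have hφinj : Set.InjOn φ ↑s := by
    intro i hi j hj hij
    simp only [hφ] at hij
    have hi0 : i ≠ 0 := fun h => hs (h ▸ hi)
    have hj0 : j ≠ 0 := fun h => hs (h ▸ hj)
    split_ifs at hij <;> omega
  have hdisj : Set.Pairwise ↑(s.image φ) (Function.onFun Disjoint I) := by
    intro m hm m' hm' hne
    simp only [Function.onFun, hI]
    rcases lt_or_gt_of_ne hne with h | h
    · have h' : (m:ℝ) + 1 ≤ (m':ℝ) := by exact_mod_cast h
      exact Set.Ioc_disjoint_Ioc.2 (le_trans (min_le_left _ _)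
        (le_trans (by nlinarith) (le_max_right _ _)))
    · have h' : (m':ℝ) + 1 ≤ (m:ℝ) := by exact_mod_cast h
      exact Set.Ioc_disjoint_Ioc.2 (le_trans (min_le_right _ _)
        (le_trans (by nlinarith) (le_max_left _ _)))
  calc ∑ i ∈ s, Real.exp (-b * (θ + 2*π*i)^2)
      ≤ ∑ i ∈ s, (2*π)⁻¹ * ∫ x in I (φ i), g x := Finset.sum_le_sum step1
    _ = (2*π)⁻¹ * ∑ i ∈ s, ∫ x in I (φ i), g x := by rw [Finset.mul_sum]
    _ = (2*π)⁻¹ * ∑ m ∈ s.image φ, ∫ x in I m, g x := by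
        rw [Finset.sum_image (fun i hi j hj h => hφinj hi hj h)]
    _ = (2*π)⁻¹ * ∫ x in ⋃ m ∈ s.image φ, I m, g x := by
        rw [integral_biUnion_finset _ (fun m _ => measurableSet_Ioc) hdisj
          (fun m _ => hgint.integrableOn)]
    _ ≤ (2*π)⁻¹ * ∫ x, g x := by
        gcongr
        exact Filter.Eventually.of_forall fun x => Real.exp_nonneg _
        exact Measure.restrict_le_self
    _ = Real.sqrt (α/π) := by
        rw [hg]
        simp only []
        rw [integral_gaussian]
        rw [show π / b = (2*π) ^ 2 * (α/π) by rw [hbdef]; field_simp; ring]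
        rw [Real.sqrt_mul (by positivity), Real.sqrt_sq (by positivity)]
        field_simp


lemma theta_sum_shifted_le {α θ : ℝ} (hα : 0 < α) (hθ1 : -π ≤ θ) (hθ2 : θ ≤ π)
    (s : Finset ℤ) :
    ∑ i ∈ s, Real.exp (-(4*α)⁻¹ * (θ + 2*π*i)^2) ≤ 1 + Real.sqrt (α/π) := by
  by_cases h0 : (0:ℤ) ∈ s
  · rw [← Finset.add_sum_erase _ _ h0]
    have h1 : Real.exp (-(4*α)⁻¹ * (θ + 2*π*((0:ℤ):ℝ))^2) ≤ 1 := by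
      apply Real.exp_le_one_iff.2
      push_cast
      nlinarith [sq_nonneg θ, inv_pos.2 (show (0:ℝ) < 4*α by linarith)]
    have h2 := theta_sum_offcenter_le hα hθ1 hθ2 (s.erase 0) (Finset.notMem_erase _ _)
    linarith
  · have h2 := theta_sum_offcenter_le hα hθ1 hθ2 s h0
    have h3 : (0:ℝ) ≤ 1 := by norm_num
    linarith

lemma theta_expand {α : ℝ} (hα : 0 < α) (Θ m : ℝ) :
    Real.exp (-Θ^2/(4*α)) * (Real.exp (-(π^2*m^2)/α) * Real.cosh (m*π*Θ/α))
      = (Real.exp (-(4*α)⁻¹*(Θ - 2*π*m)^2) + Real.exp (-(4*α)⁻¹*(Θ + 2*π*m)^2))/2 := by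
  rw [Real.cosh_eq]
  have h1 : Real.exp (-Θ^2/(4*α)) * Real.exp (-(π^2*m^2)/α) * Real.exp (m*π*Θ/α)
      = Real.exp (-(4*α)⁻¹*(Θ - 2*π*m)^2) := by
    rw [← Real.exp_add, ← Real.exp_add]; congr 1; field_simp; ring
  have h2 : Real.exp (-Θ^2/(4*α)) * Real.exp (-(π^2*m^2)/α) * Real.exp (-(m*π*Θ/α))
      = Real.exp (-(4*α)⁻¹*(Θ + 2*π*m)^2) := by
    rw [← Real.exp_add, ← Real.exp_add]; congr 1; field_simp; ring
  rw [← h1, ← h2]; ring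

lemma theta_sum_ident (F : ℤ → ℝ) (N : ℕ) :
    F 0 + ∑ n ∈ Finset.range N, (F (-(n:ℤ)-1) + F ((n:ℤ)+1)) =
      ∑ j ∈ Finset.Icc (-(N:ℤ)) (N:ℤ), F j := by
  induction N with
  | zero => simp
  | succ N ih =>
    rw [Finset.sum_range_succ]
    have hIcc : Finset.Icc (-((N:ℤ)+1)) ((N:ℤ)+1) =
        insert (-((N:ℤ)+1)) (insert ((N:ℤ)+1) (Finset.Icc (-(N:ℤ)) (N:ℤ))) := by
      ext j; simp only [Finset.mem_Icc, Finset.mem_insert]; omega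
    push_cast
    rw [hIcc, Finset.sum_insert (by simp only [Finset.mem_Icc, Finset.mem_insert]; omega),
        Finset.sum_insert (by simp only [Finset.mem_Icc]; omega)]
    push_cast at ih
    have harg : -((N:ℤ)+1) = -(N:ℤ)-1 := by ring
    rw [harg]
    linarith [ih]

/-- Uniform bound on the Gaussian-damped theta factor: for every `α > 0` and
`Θ ∈ ℝ`,
`e^{−Θ²/(4α)} (1 + 2 ∑_{n≥1} e^{−π² n²/α} cosh(nπΘ/α)) ≤ 1 + √(α/π)`. -/
theorem theta_factor_bound (α Θ : ℝ) (hα : 0 < α) :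
    Real.exp (-Θ ^ 2 / (4 * α)) *
      (1 + 2 * ∑' n : ℕ,
        Real.exp (-(Real.pi ^ 2 * ((n : ℝ) + 1) ^ 2) / α) *
          Real.cosh (((n : ℝ) + 1) * Real.pi * Θ / α)) ≤
      1 + Real.sqrt (α / Real.pi) := by
  have hπ : (0:ℝ) < π := Real.pi_pos
  set R := 1 + Real.sqrt (α/π) with hR
  set E := Real.exp (-Θ^2/(4*α)) with hE
  have hEpos : 0 < E := Real.exp_pos _
  set f : ℕ → ℝ := fun n => Real.exp (-(π^2*((n:ℝ)+1)^2)/α) * Real.cosh (((n:ℝ)+1)*π*Θ/α)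
    with hf
  have hfnonneg : ∀ n, 0 ≤ f n := fun n => mul_nonneg (Real.exp_nonneg _) (Real.cosh_pos _).le
  have key : ∀ N : ℕ, E * (1 + 2 * ∑ n ∈ Finset.range N, f n) ≤ R := by
    intro N
    set k : ℤ := ⌊(Θ + π)/(2*π)⌋ with hk
    set θ := Θ - 2*π*k with hθdef
    have h2π : (0:ℝ) < 2*π := by linarith
    have hfl1 : (k:ℝ)*(2*π) ≤ Θ+π := (le_div_iff₀ h2π).1 (Int.floor_le _)
    have hfl2 : Θ+π < ((k:ℝ)+1)*(2*π) := (div_lt_iff₀ h2π).1 (Int.lt_floor_add_one _)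
    have hθ1 : -π ≤ θ := by rw [hθdef]; nlinarith
    have hθ2 : θ ≤ π := by rw [hθdef]; nlinarith
    have hexp : E * (1 + 2*∑ n ∈ Finset.range N, f n)
        = ∑ j ∈ Finset.Icc (-(N:ℤ)) (N:ℤ), Real.exp (-(4*α)⁻¹*(Θ + 2*π*(j:ℝ))^2) := by
      rw [← theta_sum_ident (fun j => Real.exp (-(4*α)⁻¹*(Θ + 2*π*(j:ℝ))^2)) N]
      rw [mul_add, mul_one, Finset.mul_sum, Finset.mul_sum]
      congr 1
      · simp only [Int.cast_zero, mul_zero, add_zero, hE]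
        congr 1
        field_simp
      · apply Finset.sum_congr rfl
        intro n _
        have h := theta_expand hα Θ ((n:ℝ)+1)
        rw [hf, hE]
        simp only []
        calc Real.exp (-Θ^2/(4*α)) * (2 * (Real.exp (-(π^2*((n:ℝ)+1)^2)/α) *
                Real.cosh (((n:ℝ)+1)*π*Θ/α)))
            = 2 * (Real.exp (-Θ^2/(4*α)) * (Real.exp (-(π^2*((n:ℝ)+1)^2)/α) *
                Real.cosh (((n:ℝ)+1)*π*Θ/α))) := by ring
          _ = Real.exp (-(4*α)⁻¹*(Θ - 2*π*((n:ℝ)+1))^2)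
              + Real.exp (-(4*α)⁻¹*(Θ + 2*π*((n:ℝ)+1))^2) := by rw [h]; ring
          _ = Real.exp (-(4*α)⁻¹*(Θ + 2*π*((-(n:ℤ)-1 : ℤ):ℝ))^2)
              + Real.exp (-(4*α)⁻¹*(Θ + 2*π*(((n:ℤ)+1 : ℤ):ℝ))^2) := by
              congr 2 <;> push_cast <;> ring
    rw [hexp]
    have hre : ∑ j ∈ Finset.Icc (-(N:ℤ)) (N:ℤ), Real.exp (-(4*α)⁻¹*(Θ + 2*π*(j:ℝ))^2)
        = ∑ i ∈ (Finset.Icc (-(N:ℤ)) (N:ℤ)).image (· + k),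
            Real.exp (-(4*α)⁻¹*(θ + 2*π*(i:ℝ))^2) := by
      rw [Finset.sum_image (by intro a _ b _ hab; exact add_right_cancel hab)]
      apply Finset.sum_congr rfl
      intro j _
      congr 2
      push_cast
      rw [hθdef]; ring
    rw [hre, hR]
    exact theta_sum_shifted_le hα hθ1 hθ2 _
  have h2E : (0:ℝ) < 2*E := by linarith
  have hT : ∑' n, f n ≤ (R - E)/(2*E) := by
    apply Real.tsum_le_of_sum_range_le hfnonneg
    intro N
    rw [le_div_iff₀ h2E]
    nlinarith [key N]
  have h2 := (le_div_iff₀ h2E).1 hT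
  nlinarith [h2]
end

section
/- For every α > 0 and every Θ ∈ ℝ with |Θ| ≤ π, e^{Θ²/(4α)} · ( erfc((2π − Θ)/(2√α)) + erfc((2π + Θ)/(2√α)) ) ≤ 2, where erfc(x) = 1 − (2/√π) ∫_0^x e^{−t²} dt. -/
open Real

/-- The complementary error function `erfc(x) = 1 − (2/√π) ∫_0^x e^{−t²} dt`. -/
noncomputable def erfc (x : ℝ) : ℝ :=
  1 - (2 / Real.sqrt Real.pi) * ∫ t in (0 : ℝ)..x, Real.exp (-t ^ 2)

open MeasureTheory Set in
lemma gauss_Ioi : ∫ t in Ioi (0:ℝ), Real.exp (-t ^ 2) = Real.sqrt π / 2 := by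
  have := integral_gaussian_Ioi 1
  simpa using this

open MeasureTheory in
lemma integrable_gauss : Integrable (fun t : ℝ => Real.exp (-t ^ 2)) := by
  have := integrable_exp_neg_mul_sq (b := (1:ℝ)) one_pos
  simpa using this

open MeasureTheory Set in
lemma tail_eq (x : ℝ) :
    ∫ t in Ioi x, Real.exp (-t ^ 2) = ∫ s in Ioi (0:ℝ), Real.exp (-(s + x) ^ 2) := by
  have hmp : MeasurePreserving (fun s : ℝ => s + x) volume volume :=
    measurePreserving_add_right volume x
  have hemb : MeasurableEmbedding (fun s : ℝ => s + x) :=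
    (Homeomorph.addRight x).isClosedEmbedding.measurableEmbedding
  have := hmp.setIntegral_preimage_emb hemb (fun t => Real.exp (-t ^ 2)) (Ioi x)
  rw [← this]
  have hpre : (fun s : ℝ => s + x) ⁻¹' Ioi x = Ioi 0 := by
    ext s
    simp only [mem_preimage, mem_Ioi]
    constructor <;> intro h <;> linarith
  rw [hpre]

open MeasureTheory Set in
lemma tail_le {x : ℝ} (hx : 0 ≤ x) :
    ∫ t in Ioi x, Real.exp (-t ^ 2) ≤ Real.exp (-x ^ 2) * (Real.sqrt π / 2) := by
  rw [tail_eq]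
  have h1 : ∫ s in Ioi (0:ℝ), Real.exp (-(s + x) ^ 2)
      ≤ ∫ s in Ioi (0:ℝ), Real.exp (-x ^ 2) * Real.exp (-s ^ 2) := by
    apply setIntegral_mono_on
    · have : Integrable (fun s : ℝ => Real.exp (-(s + x) ^ 2)) := by
        have := integrable_gauss.comp_add_right x
        simpa using this
      exact this.integrableOn
    · exact (integrable_gauss.const_mul _).integrableOn
    · exact measurableSet_Ioi
    · intro s hs
      rw [← Real.exp_add]
      apply Real.exp_le_exp.2
      have hs' : 0 ≤ s := le_of_lt hs
      nlinarith [mul_nonneg hs' hx]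
  calc _ ≤ _ := h1
    _ = Real.exp (-x ^ 2) * (Real.sqrt π / 2) := by
        rw [integral_const_mul, gauss_Ioi]

open MeasureTheory Set in
lemma erfc_le {x : ℝ} (hx : 0 ≤ x) : erfc x ≤ Real.exp (-x ^ 2) := by
  have hsplit : (∫ t in (0:ℝ)..x, Real.exp (-t ^ 2)) + ∫ t in Ioi x, Real.exp (-t ^ 2)
      = Real.sqrt π / 2 := by
    rw [intervalIntegral.integral_of_le hx, ← gauss_Ioi,
      ← setIntegral_union (Ioc_disjoint_Ioi le_rfl) measurableSet_Ioi
        integrable_gauss.integrableOn integrable_gauss.integrableOn,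
      Ioc_union_Ioi_eq_Ioi hx]
  have hπ : 0 < Real.sqrt π := Real.sqrt_pos.2 Real.pi_pos
  have htail := tail_le hx
  unfold erfc
  have h2 : Real.sqrt π / 2 - (Real.sqrt π / 2) * Real.exp (-x ^ 2)
      ≤ ∫ t in (0:ℝ)..x, Real.exp (-t ^ 2) := by linarith
  rw [sub_le_iff_le_add]
  rw [← mul_le_mul_iff_right₀ hπ]
  have hexpand : Real.sqrt π * (Real.exp (-x ^ 2) + 2 / Real.sqrt π * ∫ t in (0:ℝ)..x, Real.exp (-t ^ 2))
      = Real.sqrt π * Real.exp (-x ^ 2) + 2 * ∫ t in (0:ℝ)..x, Real.exp (-t ^ 2) := by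
    field_simp
  rw [hexpand]
  nlinarith

/-- Estimate (A.4)–(A.6) of Appendix A: for every `α > 0` and `|Θ| ≤ π`,
`e^{Θ²/(4α)} (erfc((2π−Θ)/(2√α)) + erfc((2π+Θ)/(2√α))) ≤ 2`. -/
theorem erfc_combination_bound (α Θ : ℝ) (hα : 0 < α) (hΘ : |Θ| ≤ Real.pi) :
    Real.exp (Θ ^ 2 / (4 * α)) *
        (erfc ((2 * Real.pi - Θ) / (2 * Real.sqrt α)) +
          erfc ((2 * Real.pi + Θ) / (2 * Real.sqrt α))) ≤ 2 := by
  have hpi := Real.pi_pos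
  have habs := abs_le.1 hΘ
  have hs : 0 < Real.sqrt α := Real.sqrt_pos.2 hα
  have hs2 : Real.sqrt α ^ 2 = α := Real.sq_sqrt hα.le
  have h1 : 0 ≤ (2 * Real.pi - Θ) / (2 * Real.sqrt α) :=
    div_nonneg (by linarith) (by positivity)
  have h2 : 0 ≤ (2 * Real.pi + Θ) / (2 * Real.sqrt α) :=
    div_nonneg (by linarith) (by positivity)
  have e1 := erfc_le h1
  have e2 := erfc_le h2
  have hsq1 : ((2 * Real.pi - Θ) / (2 * Real.sqrt α)) ^ 2 = (2 * Real.pi - Θ) ^ 2 / (4 * α) := by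
    rw [div_pow]
    congr 1
    rw [mul_pow, hs2]
    norm_num
  have hsq2 : ((2 * Real.pi + Θ) / (2 * Real.sqrt α)) ^ 2 = (2 * Real.pi + Θ) ^ 2 / (4 * α) := by
    rw [div_pow]
    congr 1
    rw [mul_pow, hs2]
    norm_num
  have key : Real.exp (Θ ^ 2 / (4 * α)) *
        (erfc ((2 * Real.pi - Θ) / (2 * Real.sqrt α)) +
          erfc ((2 * Real.pi + Θ) / (2 * Real.sqrt α)))
      ≤ Real.exp (Θ ^ 2 / (4 * α)) *
        (Real.exp (-((2 * Real.pi - Θ) ^ 2 / (4 * α))) +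
          Real.exp (-((2 * Real.pi + Θ) ^ 2 / (4 * α)))) := by
    apply mul_le_mul_of_nonneg_left _ (Real.exp_pos _).le
    rw [← hsq1, ← hsq2]
    exact add_le_add e1 e2
  refine key.trans ?_
  rw [mul_add, ← Real.exp_add, ← Real.exp_add]
  have c1 : Θ ^ 2 / (4 * α) + -((2 * Real.pi - Θ) ^ 2 / (4 * α)) ≤ 0 := by
    rw [← sub_eq_add_neg, div_sub_div_same]
    apply div_nonpos_of_nonpos_of_nonneg _ (by positivity)
    nlinarith
  have c2 : Θ ^ 2 / (4 * α) + -((2 * Real.pi + Θ) ^ 2 / (4 * α)) ≤ 0 := by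
    rw [← sub_eq_add_neg, div_sub_div_same]
    apply div_nonpos_of_nonpos_of_nonneg _ (by positivity)
    nlinarith
  have := Real.exp_le_one_iff.2 c1
  have := Real.exp_le_one_iff.2 c2
  linarith
end

section
/- For every x > 0, the complementary error function satisfies erfc(x) ≤ (2/√π) · e^{−x²} / (x + √(x² + 4/π)), where erfc(x) = 1 − (2/√π) ∫_0^x e^{−t²} dt. -/
open Real

open Real MeasureTheory Set Filter Topology intervalIntegral

noncomputable def kS (x : ℝ) : ℝ := Real.sqrt (x^2 + 4/π)

noncomputable def kH (x : ℝ) : ℝ :=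
  (∫ t in (0:ℝ)..x, Real.exp (-t^2)) + Real.exp (-x^2) / (x + kS x)

lemma kS_pos (x : ℝ) : 0 < kS x := Real.sqrt_pos.2 (by positivity)
lemma kS_sq (x : ℝ) : kS x ^ 2 = x^2 + 4/π := Real.sq_sqrt (by positivity)

lemma add_kS_pos (x : ℝ) : 0 < x + kS x := by
  have h1 : |x| < kS x := by
    rw [kS, ← Real.sqrt_sq_eq_abs]
    exact Real.sqrt_lt_sqrt (sq_nonneg x) (lt_add_of_pos_right _ (by positivity))
  have := neg_abs_le x
  linarith

lemma c_gt_one : (1:ℝ) < 4/π := by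
  rw [lt_div_iff₀ pi_pos, one_mul]
  exact pi_lt_d2.trans (by norm_num)

lemma c_lt_two : (4:ℝ)/π < 2 := by
  rw [div_lt_iff₀ pi_pos]
  nlinarith [pi_gt_three]

lemma kH_deriv (x : ℝ) :
    HasDerivAt kH (Real.exp (-x^2) * (4/π - 1 - x / kS x) / (x + kS x)^2) x := by
  have hcont : Continuous fun t : ℝ => Real.exp (-t^2) := by continuity
  have hF : HasDerivAt (fun y => ∫ t in (0:ℝ)..y, Real.exp (-t^2)) (Real.exp (-x^2)) x :=
    intervalIntegral.integral_hasDerivAt_right (hcont.intervalIntegrable 0 x)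
      (hcont.stronglyMeasurableAtFilter _ _) hcont.continuousAt
  have hs : HasDerivAt kS (x / kS x) x := by
    have h1 : HasDerivAt (fun y : ℝ => y^2 + 4/π) (2*x) x := by
      simpa using ((hasDerivAt_pow 2 x).add_const (4/π))
    have h2 := (Real.hasDerivAt_sqrt (show x^2 + 4/π ≠ 0 by positivity)).comp x h1
    convert h2 using 1
    · rfl
    · rfl
    · rfl
    rw [kS]
    field_simp
  have he : HasDerivAt (fun y : ℝ => Real.exp (-y^2)) (Real.exp (-x^2) * (-(2*x))) x := by
    have h1 : HasDerivAt (fun y : ℝ => -y^2) (-(2*x)) x := by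
      simpa using (hasDerivAt_pow 2 x).fun_neg
    exact h1.exp
  have hinv : HasDerivAt (fun y => (y + kS y)⁻¹) (-(1 + x / kS x) / (x + kS x)^2) x :=
    ((hasDerivAt_id x).add hs).inv (ne_of_gt (add_kS_pos x))
  have hall := hF.add (he.mul hinv)
  have hkH : kH = fun y => (∫ t in (0:ℝ)..y, Real.exp (-t^2)) + Real.exp (-y^2) * (y + kS y)⁻¹ := by
    funext y; rw [kH, div_eq_mul_inv]
  rw [hkH]
  convert hall using 1
  · rfl
  · rfl
  · rfl
  have hs0 : kS x ≠ 0 := ne_of_gt (kS_pos x)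
  have hxs : x + kS x ≠ 0 := ne_of_gt (add_kS_pos x)
  have h2 : kS x ^ 2 = x^2 + 4/π := kS_sq x
  rw [show (4:ℝ)/π = kS x^2 - x^2 from by linarith]
  field_simp
  ring

lemma kH_zero : kH 0 = Real.sqrt π / 2 := by
  have h0 : kS 0 = 2 / Real.sqrt π := by
    rw [kS, show (0:ℝ)^2 + 4/π = 2^2/π by norm_num,
      Real.sqrt_div (by norm_num) π, Real.sqrt_sq (by norm_num)]
  have hπ : (0:ℝ) < Real.sqrt π := Real.sqrt_pos.2 pi_pos
  rw [kH, h0]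
  simp only [intervalIntegral.integral_same, zero_add, neg_zero, Real.exp_zero]
  rw [show (-(0:ℝ)^2) = 0 by norm_num, Real.exp_zero]
  field_simp

lemma kH_tendsto : Tendsto kH atTop (𝓝 (Real.sqrt π / 2)) := by
  have hint : IntegrableOn (fun t => Real.exp (-t^2)) (Ioi (0:ℝ)) := by
    have := (integrable_exp_neg_mul_sq one_pos).integrableOn (s := Ioi (0:ℝ))
    simpa using this
  have hF : Tendsto (fun x => ∫ t in (0:ℝ)..x, Real.exp (-t^2)) atTop
      (𝓝 (Real.sqrt π / 2)) := by
    have h := MeasureTheory.intervalIntegral_tendsto_integral_Ioi 0 hint tendsto_id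
    have hval : ∫ t in Ioi (0:ℝ), Real.exp (-t^2) = Real.sqrt π / 2 := by
      have := integral_gaussian_Ioi 1
      simpa using this
    rwa [hval] at h
  have hB : Tendsto (fun x => Real.exp (-x^2) / (x + kS x)) atTop (𝓝 0) := by
    have hub : ∀ᶠ x in atTop, Real.exp (-x^2) / (x + kS x) ≤ Real.exp (-x^2) := by
      filter_upwards [eventually_ge_atTop (1:ℝ)] with x hx
      have h1 : (1:ℝ) ≤ x + kS x := le_add_of_le_of_nonneg hx (kS_pos x).le
      calc Real.exp (-x^2) / (x + kS x) ≤ Real.exp (-x^2) / 1 :=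
            div_le_div_of_nonneg_left (Real.exp_pos _).le one_pos h1
        _ = Real.exp (-x^2) := by ring
    have hlb : ∀ᶠ x in atTop, 0 ≤ Real.exp (-x^2) / (x + kS x) := by
      filter_upwards with x
      exact div_nonneg (Real.exp_pos _).le (add_kS_pos x).le
    have hexp : Tendsto (fun x : ℝ => Real.exp (-x^2)) atTop (𝓝 0) := by
      apply Real.tendsto_exp_atBot.comp
      exact tendsto_neg_atBot_iff.mpr (tendsto_pow_atTop (by norm_num))
    exact squeeze_zero' hlb hub hexp
  have := hF.add hB
  rw [add_zero] at this
  exact this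

noncomputable def kX : ℝ := (4/π - 1) / Real.sqrt (2 - 4/π)

lemma kX_pos : 0 < kX := by
  apply div_pos (by linarith [c_gt_one])
  exact Real.sqrt_pos.2 (by linarith [c_lt_two])

lemma kX_sq : kX ^ 2 * (2 - 4/π) = (4/π - 1)^2 := by
  rw [kX, div_pow, Real.sq_sqrt (by linarith [c_lt_two] : (0:ℝ) ≤ 2 - 4/π)]
  have h4 : (2:ℝ) - 4/π ≠ 0 := by have := c_lt_two; linarith
  field_simp
  have h6 : (0:ℝ) < 2*π-4 := by nlinarith [pi_gt_three]
  have h5 : (0:ℝ) < π^2*(2*π-4)*π := mul_pos (mul_pos (pow_pos pi_pos 2) h6) pi_pos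
  rw [mul_div_assoc, div_self (ne_of_gt (by linarith : (0:ℝ) < π*2-4))]
  ring

lemma deriv_nonneg_left {x : ℝ} (h0 : 0 ≤ x) (hx : x ≤ kX) :
    0 ≤ 4/π - 1 - x / kS x := by
  have hs := kS_pos x
  rw [sub_nonneg, div_le_iff₀ hs]
  -- need x ≤ (4/π - 1) * kS x;  square both sides
  have h1 : x^2 * (2 - 4/π) ≤ (4/π - 1)^2 := by
    have hx2 : x^2 ≤ kX^2 := by nlinarith [kX_pos]
    nlinarith [c_lt_two, kX_sq]
  have h2 : x^2 ≤ ((4/π - 1) * kS x)^2 := by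
    have := kS_sq x
    nlinarith [c_gt_one, c_lt_two]
  nlinarith [mul_pos (show (0:ℝ) < 4/π - 1 by linarith [c_gt_one]) hs, sq_nonneg ((4/π-1)*kS x - x)]

lemma deriv_nonpos_right {x : ℝ} (hx : kX ≤ x) :
    4/π - 1 - x / kS x ≤ 0 := by
  have hs := kS_pos x
  have h0 : 0 ≤ x := le_trans kX_pos.le hx
  rw [sub_nonpos, le_div_iff₀ hs]
  have h1 : (4/π - 1)^2 ≤ x^2 * (2 - 4/π) := by
    have hx2 : kX^2 ≤ x^2 := by nlinarith [kX_pos]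
    nlinarith [c_lt_two, kX_sq]
  have h2 : ((4/π - 1) * kS x)^2 ≤ x^2 := by
    have := kS_sq x
    nlinarith [c_gt_one, c_lt_two]
  nlinarith [mul_pos (show (0:ℝ) < 4/π - 1 by linarith [c_gt_one]) hs, sq_nonneg ((4/π-1)*kS x + x)]

lemma kH_ge (x : ℝ) (hx : 0 < x) : Real.sqrt π / 2 ≤ kH x := by
  have hdiff : Differentiable ℝ kH := fun y => (kH_deriv y).differentiableAt
  have hderiv : ∀ y, deriv kH y = Real.exp (-y^2) * (4/π - 1 - y / kS y) / (y + kS y)^2 :=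
    fun y => (kH_deriv y).deriv
  rcases le_or_gt x kX with hle | hgt
  · -- monotone on Icc 0 kX
    have hmono : MonotoneOn kH (Icc 0 kX) := by
      apply monotoneOn_of_deriv_nonneg (convex_Icc 0 kX) hdiff.continuous.continuousOn
        (hdiff.differentiableOn)
      intro y hy
      rw [interior_Icc] at hy
      rw [hderiv]
      apply div_nonneg (mul_nonneg (Real.exp_pos _).le _) (sq_nonneg _)
      exact deriv_nonneg_left hy.1.le hy.2.le
    have := hmono ⟨le_refl 0, kX_pos.le⟩ ⟨hx.le, hle⟩ hx.le
    rwa [kH_zero] at this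
  · -- antitone on Ici kX
    have hanti : AntitoneOn kH (Ici kX) := by
      apply antitoneOn_of_deriv_nonpos (convex_Ici kX) hdiff.continuous.continuousOn
        (hdiff.differentiableOn)
      intro y hy
      rw [interior_Ici] at hy
      rw [hderiv]
      apply div_nonpos_of_nonpos_of_nonneg _ (sq_nonneg _)
      exact mul_nonpos_of_nonneg_of_nonpos (Real.exp_pos _).le (deriv_nonpos_right hy.le)
    apply le_of_tendsto kH_tendsto
    filter_upwards [eventually_ge_atTop x] with y hy
    exact hanti hgt.le (le_trans hgt.le hy) hy

/-- Komatsu's inequality (A.2): for every `x > 0`,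
`erfc(x) ≤ (2/√π) e^{−x²} / (x + √(x² + 4/π))`. -/
theorem erfc_komatsu_bound (x : ℝ) (hx : 0 < x) :
    erfc x ≤ (2 / Real.sqrt Real.pi) * Real.exp (-x ^ 2) /
      (x + Real.sqrt (x ^ 2 + 4 / Real.pi)) := by
  have h := kH_ge x hx
  rw [kH, kS] at h
  have hπ : (0:ℝ) < Real.sqrt π := Real.sqrt_pos.2 pi_pos
  have ha : (0:ℝ) < 2 / Real.sqrt π := by positivity
  have hxs : (0:ℝ) < x + Real.sqrt (x^2 + 4/π) := add_kS_pos x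
  have key := mul_le_mul_of_nonneg_left h ha.le
  have h1 : 2 / Real.sqrt π * (Real.sqrt π / 2) = 1 := by field_simp
  rw [mul_add, h1] at key
  rw [erfc]
  rw [mul_div_assoc]
  linarith [key]
end

section
/- Let M > 1 and m ≥ 0. There exist constants K > 0 and δ > 0 such that for every natural number i and every q = (q₁,q₂,q₃,q₄) ∈ ℤ⁴, ∫_{M^{−2(i+1)}}^{M^{−2i}} e^{−α(q₁²+q₂²+q₃²+q₄²+m²)} dα ≤ K · M^{−2i} · e^{−δ M^{−i} (|q₁|+|q₂|+|q₃|+|q₄| + m²)}. -/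
open Real

/-- Momentum-space slice bound (3.11): for `M > 1` and `m ≥ 0` there exist
`K, δ > 0` such that for every `i : ℕ` and every `q ∈ ℤ⁴`,
`∫_{M^{−2(i+1)}}^{M^{−2i}} e^{−α(|q|²+m²)} dα
  ≤ K M^{−2i} e^{−δ M^{−i} (∑_s |q_s| + m²)}`. -/
theorem momentum_slice_bound (M m : ℝ) (hM : 1 < M) (hm : 0 ≤ m) :
    ∃ K > (0 : ℝ), ∃ δ > (0 : ℝ), ∀ i : ℕ, ∀ q : Fin 4 → ℤ,
      (∫ α in (M ^ (-(2 * ((i : ℤ) + 1))))..(M ^ (-(2 * (i : ℤ)))),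
          Real.exp (-(α * ((∑ s, ((q s : ℝ)) ^ 2) + m ^ 2)))) ≤
        K * M ^ (-(2 * (i : ℤ))) *
          Real.exp (-δ * M ^ (-(i : ℤ)) * ((∑ s, |(q s : ℝ)|) + m ^ 2)) := by
  have hM0 : (0:ℝ) < M := lt_trans one_pos hM
  have hM0' : M ≠ 0 := ne_of_gt hM0
  refine ⟨Real.exp (4 + M⁻¹ * m ^ 2), Real.exp_pos _, M⁻¹, inv_pos.mpr hM0, ?_⟩
  intro i q
  set a : ℝ := M ^ (-(2 * ((i : ℤ) + 1))) with ha
  set b : ℝ := M ^ (-(2 * (i : ℤ))) with hb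
  have ha0 : 0 < a := zpow_pos hM0 _
  have hb0 : 0 < b := zpow_pos hM0 _
  have hab : a ≤ b := by
    apply zpow_le_zpow_right₀ (le_of_lt hM)
    omega
  set S : ℝ := (∑ s, ((q s : ℝ)) ^ 2) + m ^ 2 with hS
  have hS0 : 0 ≤ S := by
    apply add_nonneg
    · exact Finset.sum_nonneg fun s _ => sq_nonneg _
    · exact sq_nonneg m
  set c : ℝ := M⁻¹ * M ^ (-(i : ℤ)) with hc
  have hc0 : 0 < c := by positivity
  have hac : a = c ^ 2 := by
    rw [ha, hc, ← zpow_neg_one, ← zpow_add₀ hM0',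
      show (-(2 * ((i : ℤ) + 1))) = (-1 + -(i:ℤ)) * 2 by ring, zpow_mul]
    norm_cast
  have hcM : c ≤ M⁻¹ := by
    rw [hc]
    calc M⁻¹ * M ^ (-(i : ℤ)) ≤ M⁻¹ * 1 := by
          apply mul_le_mul_of_nonneg_left _ (by positivity)
          exact zpow_le_one_of_nonpos₀ (le_of_lt hM) (by omega)
      _ = M⁻¹ := mul_one _
  -- step 1: bound integral by (b-a) * exp(-(a*S))
  have h1 : (∫ α in a..b, Real.exp (-(α * S))) ≤ (b - a) * Real.exp (-(a * S)) := by
    have hint : IntervalIntegrable (fun α => Real.exp (-(α * S))) MeasureTheory.volume a b :=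
      Continuous.intervalIntegrable (by continuity) a b
    have := intervalIntegral.integral_mono_on (f := fun α => Real.exp (-(α * S)))
      (g := fun _ => Real.exp (-(a * S))) hab hint
      (intervalIntegrable_const)
      (fun x hx => by
        apply Real.exp_le_exp.mpr
        have hax : a ≤ x := hx.1
        nlinarith)
    simpa using this
  have h2 : (b - a) * Real.exp (-(a * S)) ≤ b * Real.exp (-(a * S)) := by
    apply mul_le_mul_of_nonneg_right _ (Real.exp_nonneg _)
    linarith
  -- step 2: exponent inequality
  have h3 : Real.exp (-(a * S)) ≤
      Real.exp (4 + M⁻¹ * m ^ 2) *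
        Real.exp (-M⁻¹ * M ^ (-(i : ℤ)) * ((∑ s, |(q s : ℝ)|) + m ^ 2)) := by
    rw [← Real.exp_add, Real.exp_le_exp]
    have hexp : -M⁻¹ * M ^ (-(i : ℤ)) = -c := by rw [hc]; ring
    rw [hexp]
    rw [hS, Fin.sum_univ_four, Fin.sum_univ_four, hac]
    have key : ∀ s : Fin 4, c * |(q s : ℝ)| ≤ c ^ 2 * (q s : ℝ) ^ 2 + 1 := by
      intro s
      have := sq_abs ((q s : ℝ))
      nlinarith [sq_nonneg (c * |(q s : ℝ)| - 1)]
    have k0 := key 0; have k1 := key 1; have k2 := key 2; have k3 := key 3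
    have hcm : c * m ^ 2 ≤ M⁻¹ * m ^ 2 := mul_le_mul_of_nonneg_right hcM (sq_nonneg m)
    have hcm2 : 0 ≤ c ^ 2 * m ^ 2 := by positivity
    linarith
  calc (∫ α in a..b, Real.exp (-(α * S))) ≤ b * Real.exp (-(a * S)) := le_trans h1 h2
    _ ≤ b * (Real.exp (4 + M⁻¹ * m ^ 2) *
        Real.exp (-M⁻¹ * M ^ (-(i : ℤ)) * ((∑ s, |(q s : ℝ)|) + m ^ 2))) :=
        mul_le_mul_of_nonneg_left h3 (le_of_lt hb0)
    _ = _ := by ring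
end

section
/- Let m > 0. There exists a constant K > 0 such that for every Θ = (Θ₁,Θ₂,Θ₃,Θ₄) ∈ ℝ⁴, ∫_{1}^{∞} (e^{−m²α}/α²) · e^{−(Θ₁²+Θ₂²+Θ₃²+Θ₄²)/(4α)} · ∏_{s=1}^{4} (1 + 2 ∑_{n=1}^{∞} e^{−π² n²/α} cosh(nπΘ_s/α)) dα ≤ K. -/
set_option maxHeartbeats 1000000


open Real MeasureTheory Set Filter Topology

namespace ZerothSliceAux

lemma cosh_le_exp_abs (x : ℝ) : Real.cosh x ≤ Real.exp |x| := by
  rw [Real.cosh_eq]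
  have h1 := Real.exp_le_exp.mpr (le_abs_self x)
  have h2 := Real.exp_le_exp.mpr (neg_le_abs x)
  linarith

/-- Geometric series bound `1/(1 - e^{-π²/α}) ≤ 2α` for `α ≥ 1`. -/
lemma geom_inv_le {α : ℝ} (hα : 1 ≤ α) :
    (1 - Real.exp (-(Real.pi ^ 2 / α)))⁻¹ ≤ 2 * α := by
  have hα0 : (0:ℝ) < α := by linarith
  have hpi : (3:ℝ) < π := pi_gt_three
  have hr0 : 0 < Real.exp (-(π ^ 2 / α)) := Real.exp_pos _
  have he : π ^ 2 / α + 1 ≤ Real.exp (π ^ 2 / α) := Real.add_one_le_exp _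
  have hre : Real.exp (-(π ^ 2 / α)) * Real.exp (π ^ 2 / α) = 1 := by
    rw [← Real.exp_add]; simp
  set r := Real.exp (-(π ^ 2 / α)) with hrdef
  have hA : r * (π ^ 2 + α) ≤ α := by
    have h1 : r * (π ^ 2 / α + 1) ≤ 1 := by
      calc r * (π ^ 2 / α + 1) ≤ r * Real.exp (π ^ 2 / α) :=
            mul_le_mul_of_nonneg_left he hr0.le
        _ = 1 := hre
    have h2 : r * (π ^ 2 / α + 1) * α ≤ 1 * α :=
      mul_le_mul_of_nonneg_right h1 hα0.le
    have h3 : r * (π ^ 2 / α + 1) * α = r * (π ^ 2 + α) := by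
      field_simp
    linarith [h3 ▸ h2]
  have h1r : 0 < 1 - r := by nlinarith
  have hA2 : 2 * α * (r * (π ^ 2 + α)) ≤ 2 * α * α :=
    mul_le_mul_of_nonneg_left hA (by positivity)
  have hpi9 : (9:ℝ) ≤ π ^ 2 := by nlinarith
  have hpa : (0:ℝ) < π ^ 2 + α := by positivity
  have hkey : 1 ≤ (1 - r) * (2 * α) := by
    have h10 : 1 * (π ^ 2 + α) ≤ ((1 - r) * (2 * α)) * (π ^ 2 + α) := by
      nlinarith [hA2, mul_le_mul_of_nonneg_left hα (sq_nonneg π)]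
    exact le_of_mul_le_mul_right h10 hpa
  calc (1 - r)⁻¹ = (1 - r)⁻¹ * 1 := by ring
    _ ≤ (1 - r)⁻¹ * ((1 - r) * (2 * α)) :=
        mul_le_mul_of_nonneg_left hkey (inv_nonneg.mpr h1r.le)
    _ = 2 * α := by field_simp

/-- Per-factor bound. -/
lemma factor_bound {α θ : ℝ} (hα : 1 ≤ α) :
    Real.exp (-(θ ^ 2) / (4 * α)) *
      (1 + 2 * ∑' n : ℕ, Real.exp (-(Real.pi ^ 2 * ((n : ℝ) + 1) ^ 2) / α) *
        Real.cosh (((n : ℝ) + 1) * Real.pi * θ / α)) ≤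
      (1 + 8 * Real.exp (2 * Real.pi ^ 2)) * α := by
  have hα0 : (0:ℝ) < α := by linarith
  have hpi : (3:ℝ) < π := pi_gt_three
  set u : ℝ := |θ| / (2 * π) with hu
  have hu0 : 0 ≤ u := by positivity
  have hθu : |θ| = 2 * π * u := by rw [hu]; field_simp
  set a : ℕ → ℝ := fun n =>
    Real.exp (-(π ^ 2 * ((n : ℝ) + 1) ^ 2) / α) *
      Real.cosh (((n : ℝ) + 1) * π * θ / α) with ha
  set b : ℕ → ℝ := fun n =>
    Real.exp (π ^ 2 / (4 * α) - π ^ 2 * |((n : ℝ) + 1) - u| / α) with hb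
  set c : ℝ := -(θ ^ 2) / (4 * α) with hc
  have ha_nonneg : ∀ n, 0 ≤ a n := fun n =>
    mul_nonneg (Real.exp_pos _).le (Real.cosh_pos _).le
  -- key pointwise inequality
  have key : ∀ n : ℕ, Real.exp c * a n ≤ b n := by
    intro n
    set x : ℝ := (n : ℝ) + 1 with hx
    have hx0 : 0 < x := by positivity
    have habs : |x * π * θ / α| = x * π * |θ| / α := by
      rw [abs_div, abs_mul, abs_mul, abs_of_pos hx0, abs_of_pos pi_pos,
        abs_of_pos hα0]
    have h1 : Real.cosh (x * π * θ / α) ≤ Real.exp (x * π * |θ| / α) := by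
      calc Real.cosh (x * π * θ / α) ≤ Real.exp |x * π * θ / α| :=
            cosh_le_exp_abs _
        _ = Real.exp (x * π * |θ| / α) := by rw [habs]
    have h2 : Real.exp c * a n ≤
        Real.exp (c + -(π ^ 2 * x ^ 2) / α + x * π * |θ| / α) := by
      rw [Real.exp_add, Real.exp_add]
      have hnn : (0:ℝ) ≤ Real.exp c * Real.exp (-(π ^ 2 * x ^ 2) / α) := by positivity
      calc Real.exp c * a n
          = Real.exp c * Real.exp (-(π ^ 2 * x ^ 2) / α) *
              Real.cosh (x * π * θ / α) := by rw [ha]; ring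
        _ ≤ Real.exp c * Real.exp (-(π ^ 2 * x ^ 2) / α) *
              Real.exp (x * π * |θ| / α) := mul_le_mul_of_nonneg_left h1 hnn
    refine h2.trans ?_
    rw [hb]
    apply Real.exp_le_exp.mpr
    have e1 : c + -(π ^ 2 * x ^ 2) / α + x * π * |θ| / α
        = -(π ^ 2 * (x - u) ^ 2) / α := by
      have hth : θ ^ 2 = (2 * π * u) ^ 2 := by rw [← hθu, sq_abs]
      rw [hc, hth, hθu]
      field_simp
      ring
    rw [e1]
    have h3 : |x - u| - 1/4 ≤ (x - u) ^ 2 := by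
      nlinarith [sq_nonneg (|x - u| - 1/2), sq_abs (x - u)]
    have e2 : π ^ 2 / (4 * α) - π ^ 2 * |x - u| / α
        = (π ^ 2 / 4 - π ^ 2 * |x - u|) / α := by ring
    rw [e2]
    have h4 : -(π ^ 2 * (x - u) ^ 2) ≤ π ^ 2 / 4 - π ^ 2 * |x - u| := by
      nlinarith [mul_le_mul_of_nonneg_left h3 (sq_nonneg π)]
    exact div_le_div_of_nonneg_right h4 hα0.le
  set r : ℝ := Real.exp (-(π ^ 2 / α)) with hr
  have hr0 : 0 < r := Real.exp_pos _
  have hr1 : r < 1 := by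
    rw [hr, Real.exp_lt_one_iff]
    have : 0 < π ^ 2 / α := by positivity
    linarith
  have hrpow : ∀ k : ℕ, Real.exp (-(π ^ 2 / α) * (k : ℝ)) = r ^ k := by
    intro k
    rw [hr, ← Real.exp_nat_mul]
    ring_nf
  have hgeom : Summable fun n : ℕ => r ^ n := summable_geometric_of_lt_one hr0.le hr1
  have hgeom_sum : ∑' n : ℕ, r ^ n = (1 - r)⁻¹ := tsum_geometric_of_lt_one hr0.le hr1
  -- summability of b
  have hble : ∀ n : ℕ, b n ≤
      (Real.exp (π ^ 2 / (4 * α)) * Real.exp (π ^ 2 * u / α) * r) * r ^ n := by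
    intro n
    have h1 : ((n:ℝ) + 1) - u ≤ |((n:ℝ) + 1) - u| := le_abs_self _
    have hexp : π ^ 2 / (4 * α) - π ^ 2 * |((n:ℝ) + 1) - u| / α ≤
        π ^ 2 / (4 * α) + π ^ 2 * u / α + (-(π ^ 2 / α)) * ((n:ℝ) + 1) := by
      have h2 : π ^ 2 * (((n:ℝ) + 1) - u) ≤ π ^ 2 * |((n:ℝ) + 1) - u| :=
        mul_le_mul_of_nonneg_left h1 (sq_nonneg π)
      have h3 := div_le_div_of_nonneg_right h2 hα0.le
      have e3 : π ^ 2 * (((n:ℝ) + 1) - u) / α =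
          -(π ^ 2 / (4 * α) + π ^ 2 * u / α + (-(π ^ 2 / α)) * ((n:ℝ) + 1))
            + π ^ 2 / (4 * α) := by ring
      rw [e3] at h3
      linarith
    calc b n ≤ Real.exp (π ^ 2 / (4 * α) + π ^ 2 * u / α + (-(π ^ 2 / α)) * ((n:ℝ) + 1)) :=
          Real.exp_le_exp.mpr hexp
      _ = (Real.exp (π ^ 2 / (4 * α)) * Real.exp (π ^ 2 * u / α) * r) * r ^ n := by
          rw [Real.exp_add, Real.exp_add]
          have hcast : Real.exp ((-(π ^ 2 / α)) * ((n:ℝ) + 1)) = r ^ (n + 1) := by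
            have := hrpow (n + 1)
            push_cast at this
            rw [← this]
          rw [hcast, pow_succ]
          ring
  have hb_nonneg : ∀ n, 0 ≤ b n := fun n => (Real.exp_pos _).le
  have hbsum : Summable b :=
    Summable.of_nonneg_of_le hb_nonneg hble (hgeom.mul_left _)
  -- tsum b ≤ 4 exp(2π²) α
  set M : ℕ := ⌈u⌉₊ with hM
  have hMu : u ≤ (M:ℝ) := Nat.le_ceil u
  have hMu2 : (M:ℝ) < u + 1 := by
    have := Nat.ceil_lt_add_one hu0
    exact_mod_cast this
  have hhead : ∑ n ∈ Finset.range M, b n ≤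
      Real.exp (π ^ 2 / (4 * α)) * Real.exp (π ^ 2 / α) * (1 - r)⁻¹ := by
    have hb_le : ∀ n ∈ Finset.range M, b n ≤
        (Real.exp (π ^ 2 / (4 * α)) * Real.exp (π ^ 2 / α)) * r ^ (M - 1 - n) := by
      intro n hn
      have hn' : n < M := Finset.mem_range.mp hn
      have hcast : ((M - 1 - n : ℕ) : ℝ) = (M:ℝ) - 1 - (n:ℝ) := by
        rw [Nat.sub_sub, Nat.cast_sub (by omega : 1 + n ≤ M)]
        push_cast; ring
      have habs2 : ((M:ℝ) - 1 - (n:ℝ)) - 1 ≤ |((n:ℝ) + 1) - u| := by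
        have h5 : u - ((n:ℝ) + 1) ≤ |((n:ℝ) + 1) - u| := by
          rw [abs_sub_comm]; exact le_abs_self _
        linarith
      have hexp2 : π ^ 2 / (4 * α) - π ^ 2 * |((n:ℝ) + 1) - u| / α ≤
          π ^ 2 / (4 * α) + π ^ 2 / α + (-(π ^ 2 / α)) * ((M - 1 - n : ℕ) : ℝ) := by
        have h6 : π ^ 2 * (((M:ℝ) - 1 - (n:ℝ)) - 1) ≤ π ^ 2 * |((n:ℝ) + 1) - u| :=
          mul_le_mul_of_nonneg_left habs2 (sq_nonneg π)
        have h7 := div_le_div_of_nonneg_right h6 hα0.le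
        rw [hcast]
        have e4 : π ^ 2 * (((M:ℝ) - 1 - (n:ℝ)) - 1) / α =
            -(π ^ 2 / (4 * α) + π ^ 2 / α + (-(π ^ 2 / α)) * ((M:ℝ) - 1 - (n:ℝ)))
              + π ^ 2 / (4 * α) := by ring
        rw [e4] at h7
        linarith
      calc b n ≤ Real.exp (π ^ 2 / (4 * α) + π ^ 2 / α +
            (-(π ^ 2 / α)) * ((M - 1 - n : ℕ) : ℝ)) := Real.exp_le_exp.mpr hexp2
        _ = (Real.exp (π ^ 2 / (4 * α)) * Real.exp (π ^ 2 / α)) * r ^ (M - 1 - n) := by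
            rw [Real.exp_add, Real.exp_add, hrpow (M - 1 - n)]
    calc ∑ n ∈ Finset.range M, b n
        ≤ ∑ n ∈ Finset.range M,
            (Real.exp (π ^ 2 / (4 * α)) * Real.exp (π ^ 2 / α)) * r ^ (M - 1 - n) :=
          Finset.sum_le_sum hb_le
      _ = (Real.exp (π ^ 2 / (4 * α)) * Real.exp (π ^ 2 / α)) *
            ∑ n ∈ Finset.range M, r ^ (M - 1 - n) := by rw [Finset.mul_sum]
      _ = (Real.exp (π ^ 2 / (4 * α)) * Real.exp (π ^ 2 / α)) *
            ∑ n ∈ Finset.range M, r ^ n := by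
          rw [Finset.sum_range_reflect (fun j => r ^ j) M]
      _ ≤ (Real.exp (π ^ 2 / (4 * α)) * Real.exp (π ^ 2 / α)) * (1 - r)⁻¹ := by
          apply mul_le_mul_of_nonneg_left _ (by positivity)
          rw [← hgeom_sum]
          exact Summable.sum_le_tsum _ (fun i _ => pow_nonneg hr0.le i) hgeom
  have htail : ∑' i : ℕ, b (i + M) ≤ Real.exp (π ^ 2 / (4 * α)) * (1 - r)⁻¹ := by
    have htail_le : ∀ i : ℕ, b (i + M) ≤ Real.exp (π ^ 2 / (4 * α)) * r ^ i := by
      intro i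
      have habs3 : (i:ℝ) ≤ |((i + M : ℕ):ℝ) + 1 - u| := by
        have h8 : ((i + M : ℕ):ℝ) + 1 - u ≤ |((i + M : ℕ):ℝ) + 1 - u| := le_abs_self _
        push_cast at h8 ⊢
        linarith
      have hexp3 : π ^ 2 / (4 * α) - π ^ 2 * |((i + M : ℕ):ℝ) + 1 - u| / α ≤
          π ^ 2 / (4 * α) + (-(π ^ 2 / α)) * (i:ℝ) := by
        have h9 : π ^ 2 * (i:ℝ) ≤ π ^ 2 * |((i + M : ℕ):ℝ) + 1 - u| :=
          mul_le_mul_of_nonneg_left habs3 (sq_nonneg π)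
        have h10 := div_le_div_of_nonneg_right h9 hα0.le
        have e5 : π ^ 2 * (i:ℝ) / α = -((-(π ^ 2 / α)) * (i:ℝ)) := by ring
        rw [e5] at h10
        linarith
      calc b (i + M) ≤ Real.exp (π ^ 2 / (4 * α) + (-(π ^ 2 / α)) * (i:ℝ)) :=
            Real.exp_le_exp.mpr hexp3
        _ = Real.exp (π ^ 2 / (4 * α)) * r ^ i := by
            rw [Real.exp_add, hrpow i]
    calc ∑' i : ℕ, b (i + M)
        ≤ ∑' i : ℕ, Real.exp (π ^ 2 / (4 * α)) * r ^ i :=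
          Summable.tsum_le_tsum htail_le ((summable_nat_add_iff M).mpr hbsum)
            (hgeom.mul_left _)
      _ = Real.exp (π ^ 2 / (4 * α)) * (1 - r)⁻¹ := by
          rw [tsum_mul_left, hgeom_sum]
  have hgeom_inv : (1 - r)⁻¹ ≤ 2 * α := geom_inv_le hα
  have hexp_bd1 : Real.exp (π ^ 2 / (4 * α)) * Real.exp (π ^ 2 / α) ≤
      Real.exp (2 * π ^ 2) := by
    rw [← Real.exp_add]
    apply Real.exp_le_exp.mpr
    have h1 : π ^ 2 / (4 * α) ≤ π ^ 2 / 4 := by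
      apply div_le_div_of_nonneg_left (sq_nonneg π) (by norm_num) (by linarith)
    have h2 : π ^ 2 / α ≤ π ^ 2 := by
      calc π ^ 2 / α ≤ π ^ 2 / 1 := by
            apply div_le_div_of_nonneg_left (sq_nonneg π) one_pos hα
        _ = π ^ 2 := by ring
    nlinarith [sq_nonneg π]
  have hexp_bd2 : Real.exp (π ^ 2 / (4 * α)) ≤ Real.exp (2 * π ^ 2) := by
    apply Real.exp_le_exp.mpr
    have h1 : π ^ 2 / (4 * α) ≤ π ^ 2 / 4 := by
      apply div_le_div_of_nonneg_left (sq_nonneg π) (by norm_num) (by linarith)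
    nlinarith [sq_nonneg π]
  have h1r : 0 < 1 - r := by linarith
  have htsum_b : ∑' n, b n ≤ 4 * Real.exp (2 * π ^ 2) * α := by
    rw [← Summable.sum_add_tsum_nat_add M hbsum]
    have hb1 : Real.exp (π ^ 2 / (4 * α)) * Real.exp (π ^ 2 / α) * (1 - r)⁻¹ ≤
        Real.exp (2 * π ^ 2) * (2 * α) :=
      mul_le_mul hexp_bd1 hgeom_inv (by positivity) (Real.exp_pos _).le
    have hb2 : Real.exp (π ^ 2 / (4 * α)) * (1 - r)⁻¹ ≤
        Real.exp (2 * π ^ 2) * (2 * α) :=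
      mul_le_mul hexp_bd2 hgeom_inv (by positivity) (Real.exp_pos _).le
    have := add_le_add (hhead.trans hb1) (htail.trans hb2)
    linarith
  -- now conclude
  have hca : Summable fun n => Real.exp c * a n :=
    Summable.of_nonneg_of_le (fun n => mul_nonneg (Real.exp_pos _).le (ha_nonneg n))
      key hbsum
  have hasum : Summable a := by
    have := hca.mul_left (Real.exp c)⁻¹
    simpa [← mul_assoc, inv_mul_cancel₀ (ne_of_gt (Real.exp_pos c))] using this
  have htsum_ca : ∑' n, Real.exp c * a n ≤ 4 * Real.exp (2 * π ^ 2) * α :=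
    (Summable.tsum_le_tsum key hca hbsum).trans htsum_b
  have hc1 : Real.exp c ≤ 1 := by
    rw [Real.exp_le_one_iff, hc]
    apply div_nonpos_of_nonpos_of_nonneg (by nlinarith [sq_nonneg θ]) (by linarith)
  calc Real.exp c * (1 + 2 * ∑' n, a n)
      = Real.exp c + 2 * ∑' n, Real.exp c * a n := by
        rw [tsum_mul_left]; ring
    _ ≤ 1 + 2 * (4 * Real.exp (2 * π ^ 2) * α) := by linarith
    _ ≤ (1 + 8 * Real.exp (2 * π ^ 2)) * α := by nlinarith [Real.exp_pos (2 * π ^ 2)]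

/-- value of `∫_1^∞ e^{-cx} dx`. -/
lemma integral_exp_neg_mul_Ioi {c : ℝ} (hc : 0 < c) :
    ∫ x in Ioi (1:ℝ), Real.exp (-(c * x)) = Real.exp (-c) / c := by
  have hderiv : ∀ x ∈ Ici (1:ℝ),
      HasDerivAt (fun y => -Real.exp (-(c * y)) / c) (Real.exp (-(c * x))) x := by
    intro x _
    have h1 : HasDerivAt (fun y : ℝ => -(c * y)) (-c) x := by
      simpa using ((hasDerivAt_id x).const_mul (-c))
    have h2 := (h1.exp.neg).div_const c
    exact h2.congr_deriv (by rw [mul_neg, neg_neg, mul_div_assoc, div_self hc.ne', mul_one])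
  have hint : IntegrableOn (fun x => Real.exp (-(c * x))) (Ioi (1:ℝ)) := by
    simpa [neg_mul] using exp_neg_integrableOn_Ioi (1:ℝ) hc
  have htend : Tendsto (fun y => -Real.exp (-(c * y)) / c) atTop (𝓝 0) := by
    have h1 : Tendsto (fun y : ℝ => c * y) atTop atTop :=
      Tendsto.const_mul_atTop hc tendsto_id
    have h2 : Tendsto (fun y : ℝ => Real.exp (-(c * y))) atTop (𝓝 0) :=
      Real.tendsto_exp_neg_atTop_nhds_zero.comp h1
    have h3 := (h2.div_const c).neg
    simpa [neg_div] using h3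
  have := integral_Ioi_of_hasDerivAt_of_tendsto' hderiv hint htend
  rw [this]
  field_simp
  ring

end ZerothSliceAux

open ZerothSliceAux in
/-- Uniform bound on the zeroth slice `C_0` of the propagator in its
direct-space parametric form (Appendix A): for `m > 0` there exists `K > 0`
such that for every `Θ ∈ ℝ⁴`,
`∫_1^∞ (e^{−m²α}/α²) e^{−|Θ|²/(4α)} ∏_s (1 + 2 ∑_{n≥1} e^{−π²n²/α} cosh(nπΘ_s/α)) dα ≤ K`. -/
theorem zeroth_slice_uniform_bound (m : ℝ) (hm : 0 < m) :
    ∃ K > (0 : ℝ), ∀ Θ : Fin 4 → ℝ,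
      (∫ α in Set.Ioi (1 : ℝ),
        Real.exp (-(m ^ 2 * α)) / α ^ 2 * Real.exp (-(∑ s, (Θ s) ^ 2) / (4 * α)) *
          ∏ s, (1 + 2 * ∑' n : ℕ,
            Real.exp (-(Real.pi ^ 2 * ((n : ℝ) + 1) ^ 2) / α) *
              Real.cosh (((n : ℝ) + 1) * Real.pi * Θ s / α))) ≤ K := by
  have hm2 : (0:ℝ) < m ^ 2 := pow_pos hm 2
  set c : ℝ := m ^ 2 / 2 with hcdef
  have hc : 0 < c := by positivity
  set C1 : ℝ := 1 + 8 * Real.exp (2 * Real.pi ^ 2) with hC1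
  have hC1pos : 0 < C1 := by positivity
  set D : ℝ := C1 ^ 4 * (27 / c ^ 3) with hD
  have hDpos : 0 < D := by positivity
  refine ⟨D * (Real.exp (-c) / c), by positivity, fun Θ => ?_⟩
  have hbound : ∀ α ∈ Ioi (1:ℝ),
      Real.exp (-(m ^ 2 * α)) / α ^ 2 * Real.exp (-(∑ s, (Θ s) ^ 2) / (4 * α)) *
        ∏ s, (1 + 2 * ∑' n : ℕ,
          Real.exp (-(Real.pi ^ 2 * ((n : ℝ) + 1) ^ 2) / α) *
            Real.cosh (((n : ℝ) + 1) * Real.pi * Θ s / α)) ≤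
        D * Real.exp (-(c * α)) := by
    intro α hα1
    have hα : (1:ℝ) ≤ α := le_of_lt hα1
    have hα0 : (0:ℝ) < α := by linarith
    -- split the Gaussian over the product
    have hsplit : Real.exp (-(∑ s, (Θ s) ^ 2) / (4 * α)) =
        ∏ s : Fin 4, Real.exp (-((Θ s) ^ 2) / (4 * α)) := by
      rw [← Real.exp_sum]
      congr 1
      rw [← Finset.sum_div, ← Finset.sum_neg_distrib]
    rw [hsplit, mul_assoc, ← Finset.prod_mul_distrib]
    have hprod : ∏ s : Fin 4, (Real.exp (-((Θ s) ^ 2) / (4 * α)) *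
        (1 + 2 * ∑' n : ℕ,
          Real.exp (-(Real.pi ^ 2 * ((n : ℝ) + 1) ^ 2) / α) *
            Real.cosh (((n : ℝ) + 1) * Real.pi * Θ s / α))) ≤ (C1 * α) ^ 4 := by
      rw [show ((C1 * α) ^ 4 : ℝ) = ∏ _s : Fin 4, (C1 * α) by
        rw [Finset.prod_const]; simp]
      apply Finset.prod_le_prod
      · intro s _
        apply mul_nonneg (Real.exp_pos _).le
        have : (0:ℝ) ≤ ∑' n : ℕ,
            Real.exp (-(Real.pi ^ 2 * ((n : ℝ) + 1) ^ 2) / α) *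
              Real.cosh (((n : ℝ) + 1) * Real.pi * Θ s / α) :=
          tsum_nonneg fun n => mul_nonneg (Real.exp_pos _).le (Real.cosh_pos _).le
        linarith
      · intro s _
        exact factor_bound hα
    have hnn : (0:ℝ) ≤ Real.exp (-(m ^ 2 * α)) / α ^ 2 := by positivity
    calc Real.exp (-(m ^ 2 * α)) / α ^ 2 *
          ∏ s : Fin 4, (Real.exp (-((Θ s) ^ 2) / (4 * α)) *
            (1 + 2 * ∑' n : ℕ,
              Real.exp (-(Real.pi ^ 2 * ((n : ℝ) + 1) ^ 2) / α) *
                Real.cosh (((n : ℝ) + 1) * Real.pi * Θ s / α)))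
        ≤ Real.exp (-(m ^ 2 * α)) / α ^ 2 * (C1 * α) ^ 4 :=
          mul_le_mul_of_nonneg_left hprod hnn
      _ ≤ D * Real.exp (-(c * α)) := by
          have hexp_split : Real.exp (-(m ^ 2 * α)) =
              Real.exp (-(c * α)) * Real.exp (-(c * α)) := by
            rw [← Real.exp_add, hcdef]; ring_nf
          have hkey : α ^ 2 * Real.exp (-(c * α)) ≤ 27 / c ^ 3 := by
            have h1 : c * α / 3 + 1 ≤ Real.exp (c * α / 3) := Real.add_one_le_exp _
            have h2 : Real.exp (c * α) = Real.exp (c * α / 3) ^ 3 := by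
              rw [← Real.exp_nat_mul]
              congr 1
              push_cast
              ring
            have h3 : (c * α / 3) ^ 3 ≤ Real.exp (c * α) := by
              rw [h2]
              apply pow_le_pow_left₀ (by positivity) (by linarith)
            have hE : 0 < Real.exp (c * α) := Real.exp_pos _
            rw [Real.exp_neg]
            rw [mul_inv_le_iff₀ hE, div_mul_eq_mul_div, le_div_iff₀ (by positivity)]
            nlinarith [pow_pos hc 3, mul_pos hc hα0,
              mul_le_mul_of_nonneg_left h3 (by positivity : (0:ℝ) ≤ 27 / 27)]
          calc Real.exp (-(m ^ 2 * α)) / α ^ 2 * (C1 * α) ^ 4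
              = C1 ^ 4 * (α ^ 2 * Real.exp (-(c * α))) * Real.exp (-(c * α)) := by
                rw [hexp_split]; field_simp
            _ ≤ C1 ^ 4 * (27 / c ^ 3) * Real.exp (-(c * α)) := by
                apply mul_le_mul_of_nonneg_right _ (Real.exp_pos _).le
                exact mul_le_mul_of_nonneg_left hkey (by positivity)
            _ = D * Real.exp (-(c * α)) := by rw [hD]
  have hg_int : Integrable (fun α => D * Real.exp (-(c * α)))
      (volume.restrict (Ioi (1:ℝ))) := by
    have := exp_neg_integrableOn_Ioi (1:ℝ) hc
    exact (this.congr_fun (fun x _ => by rw [neg_mul]) measurableSet_Ioi).const_mul D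
  have hmono := integral_mono_of_nonneg (μ := volume.restrict (Ioi (1:ℝ)))
    (f := fun α => Real.exp (-(m ^ 2 * α)) / α ^ 2 *
      Real.exp (-(∑ s, (Θ s) ^ 2) / (4 * α)) *
        ∏ s, (1 + 2 * ∑' n : ℕ,
          Real.exp (-(Real.pi ^ 2 * ((n : ℝ) + 1) ^ 2) / α) *
            Real.cosh (((n : ℝ) + 1) * Real.pi * Θ s / α)))
    (g := fun α => D * Real.exp (-(c * α)))
    (ae_of_all _ fun α => by
      apply mul_nonneg (mul_nonneg (by positivity) (Real.exp_pos _).le)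
      apply Finset.prod_nonneg
      intro s _
      have : (0:ℝ) ≤ ∑' n : ℕ,
          Real.exp (-(Real.pi ^ 2 * ((n : ℝ) + 1) ^ 2) / α) *
            Real.cosh (((n : ℝ) + 1) * Real.pi * Θ s / α) :=
        tsum_nonneg fun n => mul_nonneg (Real.exp_pos _).le (Real.cosh_pos _).le
      linarith)
    hg_int
    ((ae_restrict_iff' measurableSet_Ioi).mpr (ae_of_all _ hbound))
  calc (∫ α in Set.Ioi (1 : ℝ),
        Real.exp (-(m ^ 2 * α)) / α ^ 2 * Real.exp (-(∑ s, (Θ s) ^ 2) / (4 * α)) *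
          ∏ s, (1 + 2 * ∑' n : ℕ,
            Real.exp (-(Real.pi ^ 2 * ((n : ℝ) + 1) ^ 2) / α) *
              Real.cosh (((n : ℝ) + 1) * Real.pi * Θ s / α)))
      ≤ ∫ α in Set.Ioi (1 : ℝ), D * Real.exp (-(c * α)) := hmono
    _ = D * ∫ α in Set.Ioi (1 : ℝ), Real.exp (-(c * α)) := by
        rw [MeasureTheory.integral_const_mul]
    _ = D * (Real.exp (-c) / c) := by rw [integral_exp_neg_mul_Ioi hc]
end
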